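/- arXiv:1211.2676 — 4 statements merged into one kernel-verified Lean document; each statement's English description precedes it below -/
import Mathlib

section
/- Let H = ∫ h̃ dx be a local functional with smooth density h̃ = h̃(u, u_x, …, u^{(m)}), and let M = ∫ m dx be a local functional whose smooth density m = m(x, t, u, u_x, …, u^{(n)}) may depend explicitly on x and t; write m̃ = δM/δu = E(m). Let u(x,t) be a solution of the Hamiltonian PDE u_t = (d/dx)(δH/δu), and assume all the partial derivatives appearing below exist and are continuous. Then the function 𝓜(x,t) := m̃(x, t, u(x,t), ∂_x u(x,t), …) satisfies the linear equation ∂𝓜/∂t = Σ_{i≥0} 𝓐_i(x,t) · ∂^{i+1}𝓜/∂x^{i+1} + 𝓡(x,t) (a finite sum), where 𝓐_i(x,t) = (∂(δH/δu)/∂u^{(i)})|_{u=u(x,t)} and 𝓡(x,t) = (∂_t(δM/δu) + E((δM/δu)·(d/dx)(δH/δu)))|_{u=u(x,t)}. -/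
open Set

noncomputable section

/-- Partial derivative of a jet density with respect to the k-th jet variable `u^(k)`. -/
def pderivJet (P : (ℕ → ℝ) → ℝ) (k : ℕ) (v : ℕ → ℝ) : ℝ :=
  deriv (fun y => P (Function.update v k y)) (v k)

/-- Total x-derivative of a jet density (no explicit x,t dependence). -/
def totalDer (P : (ℕ → ℝ) → ℝ) : (ℕ → ℝ) → ℝ :=
  fun v => ∑' k : ℕ, v (k + 1) * pderivJet P k v

/-- Euler-Lagrange operator `E(P) = Σ (-1)^k (d/dx)^k ∂P/∂u^(k)`. -/
def EulerOp (P : (ℕ → ℝ) → ℝ) : (ℕ → ℝ) → ℝ :=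
  fun v => ∑' k : ℕ, (-1 : ℝ) ^ k * (totalDer^[k] (pderivJet P k)) v

/-- Total x-derivative for densities with explicit x,t dependence. -/
def totalDerXT (P : ℝ → ℝ → (ℕ → ℝ) → ℝ) : ℝ → ℝ → (ℕ → ℝ) → ℝ :=
  fun x t v => deriv (fun y => P y t v) x + ∑' k : ℕ, v (k + 1) * pderivJet (P x t) k v

/-- Euler-Lagrange operator for densities with explicit x,t dependence. -/
def EulerOpXT (P : ℝ → ℝ → (ℕ → ℝ) → ℝ) : ℝ → ℝ → (ℕ → ℝ) → ℝ :=
  fun x t v => ∑' k : ℕ, (-1 : ℝ) ^ k *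
    (totalDerXT^[k] (fun x' t' w => pderivJet (P x' t') k w)) x t v

/-- The jet of a function of one variable at a point. -/
def jetsAt (w : ℝ → ℝ) (x : ℝ) : ℕ → ℝ := fun k => iteratedDeriv k w x

def cCoef (c h : ℝ → ℝ) (u : ℝ) : ℝ := c u * iteratedDeriv 3 h u

def pCoef (c p h : ℝ → ℝ) (u : ℝ) : ℝ :=
  p u * iteratedDeriv 3 h u + (3/10) * (c u)^2 * iteratedDeriv 4 h u

def sCoef (c p s h : ℝ → ℝ) (u : ℝ) : ℝ :=
  s u * iteratedDeriv 3 h u - (1/8) * c u * iteratedDeriv 2 c u * iteratedDeriv 4 h u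
    - (1/8) * c u * deriv c u * iteratedDeriv 5 h u - (1/24) * (c u)^2 * iteratedDeriv 6 h u
    - (1/6) * deriv p u * iteratedDeriv 4 h u - (1/6) * p u * iteratedDeriv 5 h u

/-- Dubrovin's D-operator. -/
def Dop (c p s h : ℝ → ℝ) (ε : ℝ) (v : ℕ → ℝ) : ℝ :=
  h (v 0) - ε^2/2 * cCoef c h (v 0) * (v 1)^2
    + ε^4 * (pCoef c p h (v 0) * (v 2)^2 + sCoef c p s h (v 0) * (v 1)^4)

/-- Conservation defect of a t-dependent family of densities along (eveq). -/
def consDefect (c p s h : ℝ → ℝ) (S : ℝ → ℝ → ℝ → (ℕ → ℝ) → ℝ) (ε x t : ℝ) (v : ℕ → ℝ) : ℝ :=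
  deriv (fun τ => EulerOpXT (S ε) x τ v) t
    + EulerOpXT (fun x' t' w => EulerOpXT (S ε) x' t' w * totalDer (EulerOp (Dop c p s h ε)) w) x t v

/-- Conservation up to order `O(ε^K)` along (eveq). -/
def ConservedUpTo (c p s h : ℝ → ℝ) (S : ℝ → ℝ → ℝ → (ℕ → ℝ) → ℝ) (K : ℕ) : Prop :=
  ∀ x t : ℝ, ∀ v : ℕ → ℝ, ∀ j < K, iteratedDeriv j (fun ε => consDefect c p s h S ε x t v) 0 = 0

/-!
Along a solution, `∂ₜ𝓜 = (∂ₜm̃)(u) + L_{m̃}(D h̃)(u)`, where `m̃ = E(m)`, `h̃ = E(h)`,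
`D` is the total `x`-derivative and `L_a(φ) = Σ ∂a/∂u^(k) Dᵏφ` is the linearization of `a`.
The linearization of an Euler–Lagrange expression is formally self-adjoint,
`L_{E(P)}^† = L_{E(P)}` (the Helmholtz conditions, which follow from
`∂_k E(P) = (-1)ᵏ E_k(E(P))` for the higher Euler operators `E_r`, themselves governed by
`E_{r+1} ∘ D = E_r`). Hence, by the Leibniz rule for `E` and `L_{Da}^†(φ) = -L_a^†(Dφ)`,
`E(m̃ · D h̃) = L_{m̃}^†(D h̃) + L_{D h̃}^†(m̃) = L_{m̃}(D h̃) - L_{h̃}(D m̃)`,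
which rearranges to the linear equation with `𝓐_i = ∂h̃/∂u^(i)`.
-/

open Finset
open scoped ContDiff

section Calculus

variable {E : Type*} [NormedAddCommGroup E] [NormedSpace ℝ E] {g : E → ℝ}

lemma ContDiff.fderiv_apply_const (hg : ContDiff ℝ ∞ g) (d : E) :
    ContDiff ℝ ∞ fun z => fderiv ℝ g z d :=
  (hg.fderiv_right (by exact_mod_cast le_top)).clm_apply contDiff_const

lemma fderiv_fderiv_apply_comm (hg : ContDiff ℝ ∞ g) (z a b : E) :
    fderiv ℝ (fun w => fderiv ℝ g w a) z b = fderiv ℝ (fun w => fderiv ℝ g w b) z a := by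
  have hg' : Differentiable ℝ (fderiv ℝ g) :=
    (hg.fderiv_right (m := 1) (by norm_cast)).differentiable one_ne_zero
  rw [fderiv_clm_apply (hg' z) (differentiableAt_const a),
    fderiv_clm_apply (hg' z) (differentiableAt_const b)]
  have hsymm := hg.contDiffAt.isSymmSndFDerivAt (x := z) <| by
    simp only [minSmoothness_of_isRCLikeNormedField]
    exact WithTop.coe_le_coe.2 le_top
  simpa using hsymm b a

lemma hasDerivAt_update_apply (v : ℕ → ℝ) (k i : ℕ) (y : ℝ) :
    HasDerivAt (fun s => Function.update v k s i) ((Pi.single k 1 : ℕ → ℝ) i) y := by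
  rcases eq_or_ne i k with rfl | hik
  · simpa using hasDerivAt_id' y
  · simpa [Function.update_of_ne hik, Pi.single_eq_of_ne hik] using hasDerivAt_const y (v i)

variable {G : ℝ × ℝ → ℝ}

lemma ContDiff.hasDerivAt_fst_slice (hG : ContDiff ℝ ∞ G) (x t : ℝ) :
    HasDerivAt (fun y => G (y, t)) (fderiv ℝ G (x, t) (1, 0)) x :=
  ((hG.differentiable (by simp)) _).hasFDerivAt.comp_hasDerivAt x
    ((hasDerivAt_id x).prodMk (hasDerivAt_const x t))

lemma ContDiff.hasDerivAt_snd_slice (hG : ContDiff ℝ ∞ G) (x t : ℝ) :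
    HasDerivAt (fun τ => G (x, τ)) (fderiv ℝ G (x, t) (0, 1)) t :=
  ((hG.differentiable (by simp)) _).hasFDerivAt.comp_hasDerivAt t
    ((hasDerivAt_const t x).prodMk (hasDerivAt_id t))

lemma ContDiff.hasDerivAt_iteratedDeriv_fst_slice (hG : ContDiff ℝ ∞ G) (i : ℕ) (x t : ℝ) :
    HasDerivAt (fun τ => iteratedDeriv i (fun y => G (y, τ)) x)
      (iteratedDeriv i (fun y => deriv (fun τ => G (y, τ)) t) x) t := by
  induction i generalizing G with
  | zero => simpa using (hG.hasDerivAt_snd_slice x t).differentiableAt.hasDerivAt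
  | succ i ih =>
    have hG' := hG.fderiv_apply_const ((1, 0) : ℝ × ℝ)
    have hfst (τ : ℝ) : deriv (fun y => G (y, τ)) = fun y => fderiv ℝ G (y, τ) (1, 0) :=
      funext fun y => (hG.hasDerivAt_fst_slice y τ).deriv
    have hsnd : (fun y => deriv (fun τ => G (y, τ)) t) = fun y => fderiv ℝ G (y, t) (0, 1) :=
      funext fun y => (hG.hasDerivAt_snd_slice y t).deriv
    have hcomm : deriv (fun y => deriv (fun τ => G (y, τ)) t)
        = fun y => deriv (fun τ => fderiv ℝ G (y, τ) (1, 0)) t := by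
      funext y
      rw [hsnd, ((hG.fderiv_apply_const _).hasDerivAt_fst_slice y t).deriv,
        (hG'.hasDerivAt_snd_slice y t).deriv, fderiv_fderiv_apply_comm hG]
    simp only [iteratedDeriv_succ', hfst, hcomm]
    exact ih hG'

end Calculus

abbrev Density := ℝ → ℝ → (ℕ → ℝ) → ℝ

namespace Density

def partialJet (k : ℕ) (D : Density) : Density := fun x t v => pderivJet (D x t) k v

def partialX (D : Density) : Density := fun x t v => deriv (fun y => D y t v) x

def partialT (D : Density) : Density := fun x t v => deriv (fun τ => D x τ v) t

def ofJet (P : (ℕ → ℝ) → ℝ) : Density := fun _ _ v => P v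

abbrev JetSpace (ℓ : ℕ) := ℝ × ℝ × (Fin ℓ → ℝ)

def truncJet (ℓ : ℕ) (v : ℕ → ℝ) : Fin ℓ → ℝ := fun i => v i

@[simp] lemma truncJet_zero (ℓ : ℕ) : truncJet ℓ 0 = 0 := rfl

lemma truncJet_single_of_le {ℓ k : ℕ} (hk : ℓ ≤ k) : truncJet ℓ (Pi.single k 1) = 0 := by
  ext i
  exact Pi.single_eq_of_ne (by omega) _

lemma truncJet_single (ℓ : ℕ) (i : Fin ℓ) :
    truncJet ℓ (Pi.single (i : ℕ) 1) = Pi.single i 1 := by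
  ext j
  simp [truncJet, Pi.single_apply, Fin.val_inj]

def JetSpace.restrict {ℓ ℓ' : ℕ} (h : ℓ ≤ ℓ') (z : JetSpace ℓ') : JetSpace ℓ :=
  (z.1, z.2.1, fun i => z.2.2 (Fin.castLE h i))

lemma JetSpace.contDiff_restrict {ℓ ℓ' : ℕ} (h : ℓ ≤ ℓ') :
    ContDiff ℝ ∞ (JetSpace.restrict (ℓ := ℓ) h) :=
  contDiff_fst.prodMk (contDiff_snd.fst.prodMk
    (contDiff_pi.2 fun i => (contDiff_apply ℝ ℝ (Fin.castLE h i)).comp contDiff_snd.snd))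

/-- `D` depends smoothly on `x`, `t` and the jet variables `u^(i)` with `i < ℓ`, through `g`. -/
def IsSmoothRep (ℓ : ℕ) (D : Density) (g : JetSpace ℓ → ℝ) : Prop :=
  ContDiff ℝ ∞ g ∧ ∀ x t v, D x t v = g (x, t, truncJet ℓ v)

def SmoothOfOrder (ℓ : ℕ) (D : Density) : Prop := ∃ g, IsSmoothRep ℓ D g

section Representative

variable {ℓ : ℕ} {D : Density} {g : JetSpace ℓ → ℝ}

lemma IsSmoothRep.hasDerivAt_comp (h : IsSmoothRep ℓ D g) {X T : ℝ → ℝ}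
    {V : ℝ → ℕ → ℝ} {X' T' s : ℝ} {V' : ℕ → ℝ} (hX : HasDerivAt X X' s)
    (hT : HasDerivAt T T' s) (hV : ∀ i < ℓ, HasDerivAt (fun s => V s i) (V' i) s) :
    HasDerivAt (fun s => D (X s) (T s) (V s))
      (fderiv ℝ g (X s, T s, truncJet ℓ (V s)) (X', T', truncJet ℓ V')) s := by
  simp only [h.2]
  exact ((h.1.differentiable (by simp)) _).hasFDerivAt.comp_hasDerivAt s
    (hX.prodMk (hT.prodMk (hasDerivAt_pi.2 fun i => hV i i.isLt)))

lemma IsSmoothRep.hasDerivAt_update (h : IsSmoothRep ℓ D g) (k : ℕ) (x t : ℝ)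
    (v : ℕ → ℝ) :
    HasDerivAt (fun y => D x t (Function.update v k y))
      (fderiv ℝ g (x, t, truncJet ℓ v) (0, 0, truncJet ℓ (Pi.single k 1))) (v k) := by
  simpa using h.hasDerivAt_comp (hasDerivAt_const (v k) x) (hasDerivAt_const (v k) t)
    fun i _ => hasDerivAt_update_apply v k i (v k)

lemma IsSmoothRep.hasDerivAt_x (h : IsSmoothRep ℓ D g) (x t : ℝ) (v : ℕ → ℝ) :
    HasDerivAt (fun y => D y t v) (fderiv ℝ g (x, t, truncJet ℓ v) (1, 0, 0)) x := by
  simpa using h.hasDerivAt_comp (V := fun _ => v) (V' := 0) (hasDerivAt_id x)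
    (hasDerivAt_const x t) fun i _ => hasDerivAt_const x (v i)

lemma IsSmoothRep.hasDerivAt_t (h : IsSmoothRep ℓ D g) (x t : ℝ) (v : ℕ → ℝ) :
    HasDerivAt (fun τ => D x τ v) (fderiv ℝ g (x, t, truncJet ℓ v) (0, 1, 0)) t := by
  simpa using h.hasDerivAt_comp (V := fun _ => v) (V' := 0) (hasDerivAt_const t x)
    (hasDerivAt_id t) fun i _ => hasDerivAt_const t (v i)

lemma isSmoothRep_partialJet (h : IsSmoothRep ℓ D g) (k : ℕ) :
    IsSmoothRep ℓ (partialJet k D) fun z => fderiv ℝ g z (0, 0, truncJet ℓ (Pi.single k 1)) :=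
  ⟨h.1.fderiv_apply_const _, fun x t v => (h.hasDerivAt_update k x t v).deriv⟩

lemma isSmoothRep_partialX (h : IsSmoothRep ℓ D g) :
    IsSmoothRep ℓ (partialX D) fun z => fderiv ℝ g z (1, 0, 0) :=
  ⟨h.1.fderiv_apply_const _, fun x t v => (h.hasDerivAt_x x t v).deriv⟩

lemma isSmoothRep_partialT (h : IsSmoothRep ℓ D g) :
    IsSmoothRep ℓ (partialT D) fun z => fderiv ℝ g z (0, 1, 0) :=
  ⟨h.1.fderiv_apply_const _, fun x t v => (h.hasDerivAt_t x t v).deriv⟩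

lemma IsSmoothRep.fderiv_apply (h : IsSmoothRep ℓ D g) (x t : ℝ) (v : ℕ → ℝ)
    (a b : ℝ) (w : Fin ℓ → ℝ) :
    fderiv ℝ g (x, t, truncJet ℓ v) (a, b, w) = a * partialX D x t v + b * partialT D x t v
      + ∑ i : Fin ℓ, w i * partialJet i D x t v := by
  have hdir : ((a, b, w) : JetSpace ℓ) = a • (1, 0, 0) + b • (0, 1, 0)
      + ∑ i : Fin ℓ, w i • ((0, 0, truncJet ℓ (Pi.single (i : ℕ) 1)) : JetSpace ℓ) := by
    simp only [truncJet_single]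
    ext <;> simp [Prod.fst_sum, Prod.snd_sum, Pi.single_apply]
  rw [hdir]
  simp only [map_add, map_smul, map_sum, smul_eq_mul, (isSmoothRep_partialX h).2,
    (isSmoothRep_partialT h).2, (isSmoothRep_partialJet h _).2]

end Representative

section Smooth

variable {ℓ : ℕ} {A B D : Density}

lemma SmoothOfOrder.hasDerivAt_update (h : SmoothOfOrder ℓ D) (k : ℕ) (x t : ℝ)
    (v : ℕ → ℝ) :
    HasDerivAt (fun y => D x t (Function.update v k y)) (partialJet k D x t v) (v k) := by
  obtain ⟨g, hg⟩ := h
  rw [(isSmoothRep_partialJet hg k).2]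
  exact hg.hasDerivAt_update k x t v

lemma SmoothOfOrder.hasDerivAt_x (h : SmoothOfOrder ℓ D) (x t : ℝ) (v : ℕ → ℝ) :
    HasDerivAt (fun y => D y t v) (partialX D x t v) x := by
  obtain ⟨g, hg⟩ := h
  rw [(isSmoothRep_partialX hg).2]
  exact hg.hasDerivAt_x x t v

lemma SmoothOfOrder.hasDerivAt_comp (h : SmoothOfOrder ℓ D) {X T : ℝ → ℝ}
    {V : ℝ → ℕ → ℝ} {X' T' s : ℝ} {V' : ℕ → ℝ} (hX : HasDerivAt X X' s)
    (hT : HasDerivAt T T' s) (hV : ∀ i < ℓ, HasDerivAt (fun s => V s i) (V' i) s) :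
    HasDerivAt (fun s => D (X s) (T s) (V s))
      (X' * partialX D (X s) (T s) (V s) + T' * partialT D (X s) (T s) (V s)
        + ∑ i : Fin ℓ, V' i * partialJet i D (X s) (T s) (V s)) s := by
  obtain ⟨g, hg⟩ := h
  convert hg.hasDerivAt_comp hX hT hV using 1
  rw [hg.fderiv_apply]
  rfl

lemma smoothOfOrder_partialJet (h : SmoothOfOrder ℓ D) (k : ℕ) :
    SmoothOfOrder ℓ (partialJet k D) :=
  let ⟨_, hg⟩ := h; ⟨_, isSmoothRep_partialJet hg k⟩

lemma smoothOfOrder_partialX (h : SmoothOfOrder ℓ D) : SmoothOfOrder ℓ (partialX D) :=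
  let ⟨_, hg⟩ := h; ⟨_, isSmoothRep_partialX hg⟩

lemma SmoothOfOrder.mono {ℓ' : ℕ} (h : SmoothOfOrder ℓ D) (hle : ℓ ≤ ℓ') :
    SmoothOfOrder ℓ' D :=
  let ⟨g, hg, hD⟩ := h
  ⟨g ∘ JetSpace.restrict hle, hg.comp (JetSpace.contDiff_restrict hle), fun x t v => hD x t v⟩

lemma SmoothOfOrder.zero : SmoothOfOrder ℓ 0 := ⟨0, contDiff_const, fun _ _ _ => rfl⟩

lemma SmoothOfOrder.add (hA : SmoothOfOrder ℓ A) (hB : SmoothOfOrder ℓ B) :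
    SmoothOfOrder ℓ (A + B) :=
  let ⟨f, hf, hA⟩ := hA; let ⟨g, hg, hB⟩ := hB
  ⟨f + g, hf.add hg, fun x t v => by simp [hA, hB]⟩

lemma SmoothOfOrder.mul (hA : SmoothOfOrder ℓ A) (hB : SmoothOfOrder ℓ B) :
    SmoothOfOrder ℓ (A * B) :=
  let ⟨f, hf, hA⟩ := hA; let ⟨g, hg, hB⟩ := hB
  ⟨f * g, hf.mul hg, fun x t v => by simp [hA, hB]⟩

lemma SmoothOfOrder.smul (c : ℝ) (hA : SmoothOfOrder ℓ A) : SmoothOfOrder ℓ (c • A) :=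
  let ⟨f, hf, hA⟩ := hA
  ⟨c • f, hf.const_smul c, fun x t v => by simp [hA]⟩

lemma SmoothOfOrder.nsmul (n : ℕ) (hA : SmoothOfOrder ℓ A) : SmoothOfOrder ℓ (n • A) := by
  simpa only [Nat.cast_smul_eq_nsmul] using hA.smul (n : ℝ)

lemma SmoothOfOrder.sum {ι : Type*} {s : Finset ι} {F : ι → Density}
    (h : ∀ i ∈ s, SmoothOfOrder ℓ (F i)) : SmoothOfOrder ℓ (∑ i ∈ s, F i) := by
  classical
  induction s using Finset.induction_on with
  | empty => simpa using SmoothOfOrder.zero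
  | insert a s ha ih =>
    rw [Finset.sum_insert ha]
    exact (h a (mem_insert_self a s)).add (ih fun i hi => h i (mem_insert_of_mem hi))

lemma SmoothOfOrder.partialJet_of_le (h : SmoothOfOrder ℓ D) {k : ℕ} (hk : ℓ ≤ k) :
    partialJet k D = 0 := by
  obtain ⟨g, hg⟩ := h
  funext x t v
  rw [(isSmoothRep_partialJet hg k).2, truncJet_single_of_le hk]
  exact map_zero _

@[simp] lemma partialJet_zero_fun (k : ℕ) : partialJet k (0 : Density) = 0 :=
  SmoothOfOrder.zero.partialJet_of_le (Nat.zero_le k)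

lemma SmoothOfOrder.partialJet_comm (h : SmoothOfOrder ℓ D) (i j : ℕ) :
    partialJet i (partialJet j D) = partialJet j (partialJet i D) := by
  obtain ⟨g, hg⟩ := h
  funext x t v
  rw [(isSmoothRep_partialJet (isSmoothRep_partialJet hg j) i).2,
    (isSmoothRep_partialJet (isSmoothRep_partialJet hg i) j).2]
  exact fderiv_fderiv_apply_comm hg.1 _ _ _

lemma SmoothOfOrder.partialJet_partialX (h : SmoothOfOrder ℓ D) (k : ℕ) :
    partialJet k (partialX D) = partialX (partialJet k D) := by
  obtain ⟨g, hg⟩ := h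
  funext x t v
  rw [(isSmoothRep_partialJet (isSmoothRep_partialX hg) k).2,
    (isSmoothRep_partialX (isSmoothRep_partialJet hg k)).2]
  exact fderiv_fderiv_apply_comm hg.1 _ _ _

lemma partialJet_add (hA : SmoothOfOrder ℓ A) (hB : SmoothOfOrder ℓ B) (k : ℕ) :
    partialJet k (A + B) = partialJet k A + partialJet k B := by
  ext x t v
  exact ((hA.hasDerivAt_update k x t v).add (hB.hasDerivAt_update k x t v)).deriv

lemma partialJet_smul (c : ℝ) (hA : SmoothOfOrder ℓ A) (k : ℕ) :
    partialJet k (c • A) = c • partialJet k A := by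
  ext x t v
  exact ((hA.hasDerivAt_update k x t v).const_mul c).deriv

lemma partialJet_mul (hA : SmoothOfOrder ℓ A) (hB : SmoothOfOrder ℓ B) (k : ℕ) :
    partialJet k (A * B) = partialJet k A * B + A * partialJet k B := by
  ext x t v
  have := ((hA.hasDerivAt_update k x t v).fun_mul (hB.hasDerivAt_update k x t v)).deriv
  rwa [Function.update_eq_self] at this

lemma partialJet_sum {ι : Type*} {s : Finset ι} {F : ι → Density}
    (h : ∀ i ∈ s, SmoothOfOrder ℓ (F i)) (k : ℕ) :
    partialJet k (∑ i ∈ s, F i) = ∑ i ∈ s, partialJet k (F i) := by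
  ext x t v
  have := (HasDerivAt.fun_sum fun i hi => (h i hi).hasDerivAt_update k x t v).deriv
  simp only [partialJet, pderivJet, Finset.sum_apply] at this ⊢
  exact this

lemma partialX_add (hA : SmoothOfOrder ℓ A) (hB : SmoothOfOrder ℓ B) :
    partialX (A + B) = partialX A + partialX B := by
  ext x t v
  exact ((hA.hasDerivAt_x x t v).add (hB.hasDerivAt_x x t v)).deriv

lemma partialX_smul (c : ℝ) (hA : SmoothOfOrder ℓ A) :
    partialX (c • A) = c • partialX A := by
  ext x t v
  exact ((hA.hasDerivAt_x x t v).const_mul c).deriv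

lemma partialX_mul (hA : SmoothOfOrder ℓ A) (hB : SmoothOfOrder ℓ B) :
    partialX (A * B) = partialX A * B + A * partialX B := by
  ext x t v
  exact ((hA.hasDerivAt_x x t v).fun_mul (hB.hasDerivAt_x x t v)).deriv

lemma partialX_sum {ι : Type*} {s : Finset ι} {F : ι → Density}
    (h : ∀ i ∈ s, SmoothOfOrder ℓ (F i)) :
    partialX (∑ i ∈ s, F i) = ∑ i ∈ s, partialX (F i) := by
  ext x t v
  have := (HasDerivAt.fun_sum fun i hi => (h i hi).hasDerivAt_x x t v).deriv
  simp only [partialX, Finset.sum_apply] at this ⊢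
  exact this

end Smooth

section TotalDerivative

variable {ℓ : ℕ} {A B D : Density}

lemma SmoothOfOrder.totalDerXT_apply (h : SmoothOfOrder ℓ D) (x t : ℝ) (v : ℕ → ℝ) :
    totalDerXT D x t v = partialX D x t v + ∑ i : Fin ℓ, v (i + 1) * partialJet i D x t v := by
  rw [totalDerXT, tsum_eq_sum (s := range ℓ), ← Fin.sum_univ_eq_sum_range]
  · rfl
  · intro k hk
    exact mul_eq_zero_of_right _ (congr_fun₃ (h.partialJet_of_le (by simpa using hk)) x t v)

lemma smoothOfOrder_totalDerXT (h : SmoothOfOrder ℓ D) :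
    SmoothOfOrder (ℓ + 1) (totalDerXT D) := by
  obtain ⟨g, hg⟩ := h
  let r := JetSpace.restrict (Nat.le_succ ℓ)
  have hr := JetSpace.contDiff_restrict (Nat.le_succ ℓ)
  refine ⟨fun z => fderiv ℝ g (r z) (1, 0, 0) + ∑ i : Fin ℓ,
    z.2.2 i.succ * fderiv ℝ g (r z) (0, 0, truncJet ℓ (Pi.single i 1)), ?_, fun x t v => ?_⟩
  · exact ((hg.1.fderiv_apply_const _).comp hr).add (ContDiff.sum fun i _ =>
      ((contDiff_apply ℝ ℝ i.succ).comp contDiff_snd.snd).mul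
        ((hg.1.fderiv_apply_const _).comp hr))
  · rw [SmoothOfOrder.totalDerXT_apply ⟨g, hg⟩, (isSmoothRep_partialX hg).2]
    simp only [(isSmoothRep_partialJet hg _).2]
    rfl

lemma smoothOfOrder_totalDerXT_iterate (h : SmoothOfOrder ℓ D) (j : ℕ) :
    SmoothOfOrder (ℓ + j) (totalDerXT^[j] D) := by
  induction j with
  | zero => exact h
  | succ j ih => rw [Function.iterate_succ_apply']; exact smoothOfOrder_totalDerXT ih

lemma totalDerXT_zero : totalDerXT 0 = 0 := by
  ext x t v
  rw [(SmoothOfOrder.zero (ℓ := 0)).totalDerXT_apply]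
  simp [partialX]

lemma totalDerXT_iterate_zero (j : ℕ) : totalDerXT^[j] 0 = 0 :=
  Function.iterate_fixed totalDerXT_zero j

lemma totalDerXT_add (hA : SmoothOfOrder ℓ A) (hB : SmoothOfOrder ℓ B) :
    totalDerXT (A + B) = totalDerXT A + totalDerXT B := by
  ext x t v
  simp only [Pi.add_apply, (hA.add hB).totalDerXT_apply, hA.totalDerXT_apply,
    hB.totalDerXT_apply, partialX_add hA hB, partialJet_add hA hB, mul_add, sum_add_distrib]
  ring

lemma totalDerXT_smul (c : ℝ) (hA : SmoothOfOrder ℓ A) :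
    totalDerXT (c • A) = c • totalDerXT A := by
  ext x t v
  simp only [Pi.smul_apply, (hA.smul c).totalDerXT_apply, hA.totalDerXT_apply,
    partialX_smul c hA, partialJet_smul c hA, smul_eq_mul, mul_add, mul_sum]
  ring_nf

lemma totalDerXT_nsmul (n : ℕ) (hA : SmoothOfOrder ℓ A) :
    totalDerXT (n • A) = n • totalDerXT A := by
  simpa only [Nat.cast_smul_eq_nsmul] using totalDerXT_smul (n : ℝ) hA

lemma totalDerXT_mul (hA : SmoothOfOrder ℓ A) (hB : SmoothOfOrder ℓ B) :
    totalDerXT (A * B) = totalDerXT A * B + A * totalDerXT B := by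
  ext x t v
  simp only [Pi.add_apply, Pi.mul_apply, (hA.mul hB).totalDerXT_apply, hA.totalDerXT_apply,
    hB.totalDerXT_apply, partialX_mul hA hB, partialJet_mul hA hB, mul_add, add_mul,
    sum_add_distrib, mul_sum, sum_mul]
  ring_nf

lemma totalDerXT_sum {ι : Type*} {s : Finset ι} {F : ι → Density}
    (h : ∀ i ∈ s, SmoothOfOrder ℓ (F i)) :
    totalDerXT (∑ i ∈ s, F i) = ∑ i ∈ s, totalDerXT (F i) := by
  ext x t v
  simp only [Finset.sum_apply, (SmoothOfOrder.sum h).totalDerXT_apply, partialX_sum h,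
    partialJet_sum h, mul_sum]
  rw [sum_comm, ← sum_add_distrib]
  exact sum_congr rfl fun i hi => ((h i hi).totalDerXT_apply x t v).symm

lemma totalDerXT_iterate_add (hA : SmoothOfOrder ℓ A) (hB : SmoothOfOrder ℓ B) (j : ℕ) :
    totalDerXT^[j] (A + B) = totalDerXT^[j] A + totalDerXT^[j] B := by
  induction j with
  | zero => rfl
  | succ j ih =>
    simp only [Function.iterate_succ_apply', ih]
    exact totalDerXT_add (smoothOfOrder_totalDerXT_iterate hA j)
      (smoothOfOrder_totalDerXT_iterate hB j)

lemma totalDerXT_iterate_smul (c : ℝ) (hA : SmoothOfOrder ℓ A) (j : ℕ) :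
    totalDerXT^[j] (c • A) = c • totalDerXT^[j] A := by
  induction j with
  | zero => rfl
  | succ j ih =>
    simp only [Function.iterate_succ_apply', ih]
    exact totalDerXT_smul c (smoothOfOrder_totalDerXT_iterate hA j)

lemma totalDerXT_iterate_sum {ι : Type*} {s : Finset ι} {F : ι → Density}
    (h : ∀ i ∈ s, SmoothOfOrder ℓ (F i)) (j : ℕ) :
    totalDerXT^[j] (∑ i ∈ s, F i) = ∑ i ∈ s, totalDerXT^[j] (F i) := by
  induction j with
  | zero => rfl
  | succ j ih =>
    simp only [Function.iterate_succ_apply', ih]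
    exact totalDerXT_sum fun i hi => smoothOfOrder_totalDerXT_iterate (h i hi) j

lemma totalDerXT_iterate_mul (hA : SmoothOfOrder ℓ A) (hB : SmoothOfOrder ℓ B) (j : ℕ) :
    totalDerXT^[j] (A * B)
      = ∑ i ∈ range (j + 1), j.choose i • (totalDerXT^[j - i] A * totalDerXT^[i] B) := by
  induction j with
  | zero => simp
  | succ j ih =>
    have hA' (i : ℕ) (hi : i ≤ j) := (smoothOfOrder_totalDerXT_iterate hA i).mono
      (by omega : ℓ + i ≤ ℓ + j)
    have hB' (i : ℕ) (hi : i ≤ j) := (smoothOfOrder_totalDerXT_iterate hB i).mono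
      (by omega : ℓ + i ≤ ℓ + j)
    rw [sum_choose_succ_nsmul (fun p q => totalDerXT^[q] A * totalDerXT^[p] B) j,
      Function.iterate_succ_apply', ih, totalDerXT_sum fun i hi =>
        ((hA' _ (by omega)).mul (hB' i (by simp at hi; omega))).nsmul _,
      ← sum_add_distrib]
    refine sum_congr rfl fun i hi => ?_
    have hij : i ≤ j := by simp at hi; omega
    rw [totalDerXT_nsmul _ ((hA' _ (by omega)).mul (hB' i hij)),
      totalDerXT_mul (hA' _ (by omega)) (hB' i hij), show j + 1 - i = j - i + 1 by omega,
      smul_add, Function.iterate_succ_apply', Function.iterate_succ_apply']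

end TotalDerivative

section Commutation

variable {ℓ : ℕ} {D : Density}

lemma SmoothOfOrder.partialJet_totalDerXT_apply (h : SmoothOfOrder ℓ D) (k : ℕ) (x t : ℝ)
    (v : ℕ → ℝ) :
    partialJet k (totalDerXT D) x t v = totalDerXT (partialJet k D) x t v
      + ∑ i : Fin ℓ, (Pi.single k 1 : ℕ → ℝ) (i + 1) * partialJet i D x t v := by
  have hderiv := ((smoothOfOrder_partialX h).hasDerivAt_update k x t v).fun_add
    (HasDerivAt.fun_sum (u := univ) fun (i : Fin ℓ) _ =>
      (hasDerivAt_update_apply v k (i + 1) (v k)).fun_mul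
        ((smoothOfOrder_partialJet h i).hasDerivAt_update k x t v))
  simp only [Function.update_eq_self] at hderiv
  have hfun : (fun y => totalDerXT D x t (Function.update v k y)) = fun y =>
      partialX D x t (Function.update v k y) + ∑ i : Fin ℓ,
        Function.update v k y (i + 1) * partialJet i D x t (Function.update v k y) :=
    funext fun y => h.totalDerXT_apply x t _
  rw [partialJet, pderivJet, hfun, hderiv.deriv, (smoothOfOrder_partialJet h k).totalDerXT_apply,
    h.partialJet_partialX]
  simp only [h.partialJet_comm k, sum_add_distrib]
  ring

lemma SmoothOfOrder.partialJet_zero_totalDerXT (h : SmoothOfOrder ℓ D) :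
    partialJet 0 (totalDerXT D) = totalDerXT (partialJet 0 D) := by
  ext x t v
  simp [h.partialJet_totalDerXT_apply]

lemma SmoothOfOrder.partialJet_succ_totalDerXT (h : SmoothOfOrder ℓ D) (k : ℕ) :
    partialJet (k + 1) (totalDerXT D) = totalDerXT (partialJet (k + 1) D) + partialJet k D := by
  ext x t v
  simp only [h.partialJet_totalDerXT_apply, Pi.add_apply, Pi.single_apply, add_left_inj,
    ite_mul, one_mul, zero_mul]
  rw [Fin.sum_univ_eq_sum_range (fun i => if i = k then partialJet i D x t v else 0),
    sum_ite_eq']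
  split_ifs with hk
  · rfl
  · rw [congr_fun₃ (h.partialJet_of_le (by simpa using hk)) x t v]
    rfl

lemma SmoothOfOrder.partialJet_totalDerXT_iterate (h : SmoothOfOrder ℓ D) (a k : ℕ) :
    partialJet k (totalDerXT^[a] D) = ∑ i ∈ range (a + 1),
      a.choose i • if i ≤ k then totalDerXT^[a - i] (partialJet (k - i) D) else 0 := by
  induction a generalizing k with
  | zero => simp
  | succ a ih =>
    have hterm : ∀ i ∈ range (a + 1), SmoothOfOrder (ℓ + a)
        (if i ≤ k then totalDerXT^[a - i] (partialJet (k - i) D) else 0) := fun i hi => by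
      split_ifs
      · exact (smoothOfOrder_totalDerXT_iterate (smoothOfOrder_partialJet h _) _).mono
          (by simp at hi; omega)
      · exact .zero
    have hfirst : totalDerXT (partialJet k (totalDerXT^[a] D)) = ∑ i ∈ range (a + 1),
        a.choose i • if i ≤ k then totalDerXT^[a + 1 - i] (partialJet (k - i) D) else 0 := by
      rw [ih, totalDerXT_sum fun i hi => (hterm i hi).nsmul _]
      refine sum_congr rfl fun i hi => ?_
      rw [totalDerXT_nsmul _ (hterm i hi)]
      split_ifs
      · rw [show a + 1 - i = a - i + 1 by simp at hi; omega, Function.iterate_succ_apply']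
      · rw [totalDerXT_zero]
    rw [sum_choose_succ_nsmul
      (fun p q => if p ≤ k then totalDerXT^[q] (partialJet (k - p) D) else 0) a,
      Function.iterate_succ_apply', ← hfirst]
    cases k with
    | zero => simp [(smoothOfOrder_totalDerXT_iterate h a).partialJet_zero_totalDerXT]
    | succ k =>
      rw [(smoothOfOrder_totalDerXT_iterate h a).partialJet_succ_totalDerXT, ih k]
      simp

end Commutation

section Euler

variable {ℓ L : ℕ} {D : Density}

lemma SmoothOfOrder.totalDerXT_iterate_partialJet_of_le (h : SmoothOfOrder ℓ D) {k : ℕ}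
    (hk : ℓ ≤ k) (j : ℕ) : totalDerXT^[j] (partialJet k D) = 0 := by
  rw [h.partialJet_of_le hk, totalDerXT_iterate_zero]

lemma SmoothOfOrder.eulerOpXT_eq_sum (h : SmoothOfOrder ℓ D) (hL : ℓ ≤ L) :
    EulerOpXT D = ∑ k ∈ range L, (-1 : ℝ) ^ k • totalDerXT^[k] (partialJet k D) := by
  ext x t v
  simp only [Finset.sum_apply, Pi.smul_apply, smul_eq_mul]
  refine tsum_eq_sum fun k hk => ?_
  change (-1 : ℝ) ^ k * totalDerXT^[k] (partialJet k D) x t v = 0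
  rw [h.totalDerXT_iterate_partialJet_of_le (hL.trans (by simpa using hk))]
  simp

lemma smoothOfOrder_eulerOpXT (h : SmoothOfOrder ℓ D) :
    SmoothOfOrder (2 * ℓ) (EulerOpXT D) := by
  rw [h.eulerOpXT_eq_sum le_rfl]
  refine SmoothOfOrder.sum fun k hk => .smul _ ?_
  exact (smoothOfOrder_totalDerXT_iterate (smoothOfOrder_partialJet h k) k).mono
    (by simp at hk; omega)

/-- The higher Euler operator `E_r`. Here and below, sums over jet orders stop after `L` terms;
nothing is lost once `L` exceeds the order of the densities involved. -/
def higherEuler (L r : ℕ) (D : Density) : Density :=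
  ∑ i ∈ range L, ((-1 : ℝ) ^ i * (r + i).choose r) • totalDerXT^[i] (partialJet (r + i) D)

lemma SmoothOfOrder.higherEuler_of_le (h : SmoothOfOrder ℓ D) {r : ℕ} (hr : ℓ ≤ r) :
    higherEuler L r D = 0 :=
  sum_eq_zero fun i _ => by rw [h.totalDerXT_iterate_partialJet_of_le (by omega), smul_zero]

lemma higherEuler_smul (c : ℝ) (h : SmoothOfOrder ℓ D) (r : ℕ) :
    higherEuler L r (c • D) = c • higherEuler L r D := by
  simp only [higherEuler, smul_sum, partialJet_smul c h,
    totalDerXT_iterate_smul c (smoothOfOrder_partialJet h _), smul_comm c]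

lemma higherEuler_sum {ι : Type*} {s : Finset ι} {F : ι → Density}
    (h : ∀ i ∈ s, SmoothOfOrder ℓ (F i)) (r : ℕ) :
    higherEuler L r (∑ i ∈ s, F i) = ∑ i ∈ s, higherEuler L r (F i) := by
  simp only [higherEuler, partialJet_sum h, totalDerXT_iterate_sum fun i hi =>
    smoothOfOrder_partialJet (h i hi) _, smul_sum]
  exact sum_comm

lemma SmoothOfOrder.higherEuler_zero_totalDerXT (h : SmoothOfOrder ℓ D) (hL : ℓ + 1 ≤ L) :
    higherEuler L 0 (totalDerXT D) = 0 := by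
  obtain ⟨L, rfl⟩ : ∃ L', L = L' + 1 := ⟨L - 1, by omega⟩
  set b : ℕ → Density := fun i => (-1 : ℝ) ^ i • totalDerXT^[i + 1] (partialJet i D)
  have hterm : ∀ i, ((-1 : ℝ) ^ (i + 1) * (0 + (i + 1)).choose 0) •
      totalDerXT^[i + 1] (partialJet (0 + (i + 1)) (totalDerXT D)) = b (i + 1) - b i := by
    intro i
    rw [zero_add, h.partialJet_succ_totalDerXT, totalDerXT_iterate_add
      (smoothOfOrder_totalDerXT (smoothOfOrder_partialJet h _))
      ((smoothOfOrder_partialJet h _).mono (Nat.le_succ ℓ)), ← Function.iterate_succ_apply]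
    simp only [b, Nat.choose_zero_right, Nat.cast_one, mul_one, pow_succ]
    module
  rw [higherEuler, sum_range_succ', sum_congr rfl fun i _ => hterm i, sum_range_sub,
    h.partialJet_zero_totalDerXT]
  simp [b, h.partialJet_of_le (by omega : ℓ ≤ L), totalDerXT_zero, totalDerXT_iterate_zero]

-- Pascal's rule splits the binomial coefficient; the surplus terms telescope.
lemma SmoothOfOrder.higherEuler_succ_totalDerXT (h : SmoothOfOrder ℓ D) (hL : ℓ ≤ L)
    (r : ℕ) :
    higherEuler L (r + 1) (totalDerXT D) = higherEuler L r D := by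
  set c : ℕ → Density := fun i =>
    ((-1 : ℝ) ^ i * (r + i).choose (r + 1)) • totalDerXT^[i] (partialJet (r + i) D)
  have hterm : ∀ i, ((-1 : ℝ) ^ i * (r + 1 + i).choose (r + 1)) •
      totalDerXT^[i] (partialJet (r + 1 + i) (totalDerXT D))
      = ((-1 : ℝ) ^ i * (r + i).choose r) • totalDerXT^[i] (partialJet (r + i) D)
        + (c i - c (i + 1)) := by
    intro i
    rw [show r + 1 + i = r + i + 1 by omega, h.partialJet_succ_totalDerXT, totalDerXT_iterate_add
      (smoothOfOrder_totalDerXT (smoothOfOrder_partialJet h _))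
      ((smoothOfOrder_partialJet h _).mono (Nat.le_succ ℓ)), ← Function.iterate_succ_apply]
    simp only [c, Nat.choose_succ_succ, show r + (i + 1) = r + i + 1 by omega, pow_succ]
    push_cast
    module
  rw [higherEuler, sum_congr rfl fun i _ => hterm i, sum_add_distrib, sum_range_sub']
  simp [c, h.totalDerXT_iterate_partialJet_of_le (by omega : ℓ ≤ r + L), higherEuler]

lemma SmoothOfOrder.higherEuler_totalDerXT_iterate (h : SmoothOfOrder ℓ D) (s : ℕ)
    (hL : ℓ + s ≤ L) (r : ℕ) :
    higherEuler L r (totalDerXT^[s] D) = if s ≤ r then higherEuler L (r - s) D else 0 := by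
  induction s generalizing r with
  | zero => simp
  | succ s ih =>
    have hs := smoothOfOrder_totalDerXT_iterate h s
    rw [Function.iterate_succ_apply']
    cases r with
    | zero => simp [hs.higherEuler_zero_totalDerXT (by omega)]
    | succ r => simp [hs.higherEuler_succ_totalDerXT (L := L) (by omega) r, ih (by omega)]

end Euler

section Helmholtz

variable {ℓ L k : ℕ} {M : Density}

lemma SmoothOfOrder.partialJet_eulerOpXT_eq_sum (h : SmoothOfOrder ℓ M) (hL : ℓ ≤ L) (hk : k < L) :
    partialJet k (EulerOpXT M) = ∑ i ∈ range (k + 1), ∑ p ∈ range L,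
      ((-1 : ℝ) ^ (i + p) * (i + p).choose i) •
        totalDerXT^[p] (partialJet (k - i) (partialJet (i + p) M)) := by
  set f : ℕ → ℕ → Density := fun i p => if i ≤ k then
    ((-1 : ℝ) ^ (i + p) * (i + p).choose i) •
      totalDerXT^[p] (partialJet (k - i) (partialJet (i + p) M)) else 0
  have hterm : ∀ a ∈ range L, partialJet k ((-1 : ℝ) ^ a • totalDerXT^[a] (partialJet a M))
      = ∑ i ∈ range (a + 1), f i (a - i) := by
    intro a _
    rw [partialJet_smul _ (smoothOfOrder_totalDerXT_iterate (smoothOfOrder_partialJet h a) a),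
      (smoothOfOrder_partialJet h a).partialJet_totalDerXT_iterate, smul_sum]
    refine sum_congr rfl fun i hi => ?_
    have hia : i + (a - i) = a := by simp at hi; omega
    simp only [f, hia]
    split_ifs
    · rw [← Nat.cast_smul_eq_nsmul ℝ, smul_smul]
    · simp
  have hvanish : ∀ i, ∀ p ≥ L - i, f i p = 0 := fun i p hp => by
    simp only [f, h.partialJet_of_le (by omega : ℓ ≤ i + p)]
    split_ifs <;> simp [totalDerXT_iterate_zero]
  rw [h.eulerOpXT_eq_sum hL, partialJet_sum (ℓ := ℓ + L) fun a ha =>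
      ((smoothOfOrder_totalDerXT_iterate (smoothOfOrder_partialJet h a) a).mono
        (by simp at ha; omega)).smul _,
    sum_congr rfl hterm, sum_range_diag_flip,
    eventually_constant_sum (N := k + 1) (fun i hi => sum_eq_zero fun p _ => if_neg (by omega))
      (by omega)]
  refine sum_congr rfl fun i hi => ?_
  rw [eventually_constant_sum (hvanish i) (Nat.sub_le L i) |>.symm]
  exact sum_congr rfl fun p _ => if_pos (by simp at hi; omega)

lemma SmoothOfOrder.higherEuler_eulerOpXT_eq_sum (h : SmoothOfOrder ℓ M) (hL : 2 * ℓ ≤ L)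
    (hk : k < L) :
    (-1 : ℝ) ^ k • higherEuler L k (EulerOpXT M) = ∑ i ∈ range (k + 1), ∑ p ∈ range L,
      ((-1 : ℝ) ^ (i + p) * (i + p).choose i) •
        totalDerXT^[p] (partialJet (k - i) (partialJet (i + p) M)) := by
  have hterm : ∀ j, higherEuler L k ((-1 : ℝ) ^ j • totalDerXT^[j] (partialJet j M))
      = if j ≤ k then (-1 : ℝ) ^ j • higherEuler L (k - j) (partialJet j M) else 0 := by
    intro j
    rcases lt_or_ge j ℓ with hj | hj
    · rw [higherEuler_smul _ (smoothOfOrder_totalDerXT_iterate (smoothOfOrder_partialJet h j) j),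
        (smoothOfOrder_partialJet h j).higherEuler_totalDerXT_iterate j (by omega)]
      split_ifs <;> simp
    · simp [h.partialJet_of_le hj, totalDerXT_iterate_zero, higherEuler]
  rw [h.eulerOpXT_eq_sum (by omega : ℓ ≤ L), higherEuler_sum (ℓ := ℓ + L) fun j hj =>
      ((smoothOfOrder_totalDerXT_iterate (smoothOfOrder_partialJet h j) j).mono
        (by simp at hj; omega)).smul _,
    sum_congr rfl fun j _ => hterm j, smul_sum,
    eventually_constant_sum (N := k + 1) (fun j hj => by rw [if_neg (by omega), smul_zero])
      (by omega), ← sum_range_reflect]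
  refine sum_congr rfl fun i hi => ?_
  have hik : i ≤ k := by simp at hi; omega
  rw [show k + 1 - 1 - i = k - i by omega, if_pos (by omega), show k - (k - i) = i by omega,
    higherEuler, smul_sum, smul_sum]
  have hsign : (-1 : ℝ) ^ k * (-1) ^ (k - i) = (-1) ^ i := by
    rw [← pow_add, show k + (k - i) = i + 2 * (k - i) by omega, pow_add, pow_mul]
    simp
  refine sum_congr rfl fun p _ => ?_
  rw [smul_smul, smul_smul, hsign, ← mul_assoc, ← pow_add, h.partialJet_comm (i + p)]

lemma SmoothOfOrder.partialJet_eulerOpXT_eq_higherEuler (h : SmoothOfOrder ℓ M)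
    (hL : 2 * ℓ ≤ L) (k : ℕ) :
    partialJet k (EulerOpXT M) = (-1 : ℝ) ^ k • higherEuler L k (EulerOpXT M) := by
  rcases lt_or_ge k L with hk | hk
  · rw [h.partialJet_eulerOpXT_eq_sum (by omega) hk, h.higherEuler_eulerOpXT_eq_sum hL hk]
  · rw [(smoothOfOrder_eulerOpXT h).partialJet_of_le (by omega),
      (smoothOfOrder_eulerOpXT h).higherEuler_of_le (by omega), smul_zero]

end Helmholtz

section Linearization

variable {ℓ L : ℕ} {a b φ : Density}

def linearization (L : ℕ) (a φ : Density) : Density :=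
  ∑ k ∈ range L, partialJet k a * totalDerXT^[k] φ

def adjointLinearization (L : ℕ) (a φ : Density) : Density :=
  ∑ k ∈ range L, (-1 : ℝ) ^ k • totalDerXT^[k] (partialJet k a * φ)

lemma eulerOpXT_mul (ha : SmoothOfOrder ℓ a) (hb : SmoothOfOrder ℓ b) (hL : ℓ ≤ L) :
    EulerOpXT (a * b) = adjointLinearization L a b + adjointLinearization L b a := by
  rw [(ha.mul hb).eulerOpXT_eq_sum hL, adjointLinearization, adjointLinearization,
    ← sum_add_distrib]
  refine sum_congr rfl fun k _ => ?_
  rw [partialJet_mul ha hb, mul_comm a, totalDerXT_iterate_add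
    ((smoothOfOrder_partialJet ha k).mul hb) ((smoothOfOrder_partialJet hb k).mul ha), smul_add]

lemma adjointLinearization_eq_sum (ha : SmoothOfOrder ℓ a) (hφ : SmoothOfOrder ℓ φ)
    (hL : ℓ ≤ L) : adjointLinearization L a φ
      = ∑ r ∈ range L, ((-1 : ℝ) ^ r • higherEuler L r a) * totalDerXT^[r] φ := by
  set f : ℕ → ℕ → Density := fun r i => ((-1 : ℝ) ^ (r + i) * (r + i).choose r) •
    (totalDerXT^[i] (partialJet (r + i) a) * totalDerXT^[r] φ)
  have hterm : ∀ k, (-1 : ℝ) ^ k • totalDerXT^[k] (partialJet k a * φ)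
      = ∑ r ∈ range (k + 1), f r (k - r) := by
    intro k
    rw [totalDerXT_iterate_mul (smoothOfOrder_partialJet ha k) hφ, smul_sum]
    refine sum_congr rfl fun r hr => ?_
    have hrk : r + (k - r) = k := by simp at hr; omega
    simp only [f, hrk, ← Nat.cast_smul_eq_nsmul ℝ, smul_smul]
  rw [adjointLinearization, sum_congr rfl fun k _ => hterm k, sum_range_diag_flip]
  refine sum_congr rfl fun r _ => ?_
  rw [← eventually_constant_sum (u := f r) (fun i hi => by
      simp [f, ha.totalDerXT_iterate_partialJet_of_le (by omega : ℓ ≤ r + i)]) (Nat.sub_le L r),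
    higherEuler, smul_sum, sum_mul]
  refine sum_congr rfl fun i _ => ?_
  rw [smul_smul, smul_mul_assoc, ← mul_assoc, ← pow_add]

lemma adjointLinearization_eulerOpXT {M : Density} (hM : SmoothOfOrder ℓ M)
    (hφ : SmoothOfOrder L φ) (hL : 2 * ℓ ≤ L) :
    adjointLinearization L (EulerOpXT M) φ = linearization L (EulerOpXT M) φ := by
  rw [adjointLinearization_eq_sum ((smoothOfOrder_eulerOpXT hM).mono hL) hφ le_rfl, linearization]
  exact sum_congr rfl fun r _ => by rw [hM.partialJet_eulerOpXT_eq_higherEuler hL r]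

lemma adjointLinearization_totalDerXT (ha : SmoothOfOrder ℓ a) (hφ : SmoothOfOrder ℓ φ)
    (hL : ℓ < L) :
    adjointLinearization L (totalDerXT a) φ = -adjointLinearization L a (totalDerXT φ) := by
  obtain ⟨L, rfl⟩ : ∃ L', L = L' + 1 := ⟨L - 1, by omega⟩
  rw [adjointLinearization_eq_sum (smoothOfOrder_totalDerXT ha) (hφ.mono (Nat.le_succ ℓ)) hL,
    adjointLinearization_eq_sum (ha.mono (Nat.le_succ ℓ)) (smoothOfOrder_totalDerXT hφ) hL,
    sum_range_succ', sum_range_succ, ha.higherEuler_of_le (by omega : ℓ ≤ L), ha.higherEuler_zero_totalDerXT hL]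
  simp only [ha.higherEuler_succ_totalDerXT (by omega : ℓ ≤ L + 1),
    ← Function.iterate_succ_apply, pow_succ, mul_neg_one, neg_smul, neg_mul, sum_neg_distrib, smul_zero, zero_mul, add_zero]

lemma linearization_eulerOpXT_totalDerXT {M H : Density} (hM : SmoothOfOrder ℓ M)
    (hH : SmoothOfOrder ℓ H) (hL : 2 * ℓ < L) :
    linearization L (EulerOpXT M) (totalDerXT (EulerOpXT H))
      = EulerOpXT (EulerOpXT M * totalDerXT (EulerOpXT H))
        + linearization L (EulerOpXT H) (totalDerXT (EulerOpXT M)) := by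
  have hm := smoothOfOrder_eulerOpXT hM
  have hh := smoothOfOrder_eulerOpXT hH
  rw [eulerOpXT_mul (hm.mono (Nat.le_succ _)) (smoothOfOrder_totalDerXT hh) hL,
    adjointLinearization_totalDerXT hh hm hL,
    adjointLinearization_eulerOpXT hM ((smoothOfOrder_totalDerXT hh).mono hL) hL.le,
    adjointLinearization_eulerOpXT hH ((smoothOfOrder_totalDerXT hm).mono hL) hL.le]
  abel

end Linearization

section Solution

variable {ℓ : ℕ} {D : Density}

lemma SmoothOfOrder.hasDerivAt_jetsAt (h : SmoothOfOrder ℓ D) {w : ℝ → ℝ}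
    (hw : ContDiff ℝ ∞ w) (x t : ℝ) :
    HasDerivAt (fun y => D y t (jetsAt w y)) (totalDerXT D x t (jetsAt w x)) x := by
  have hjet : ∀ i, HasDerivAt (fun y => jetsAt w y i) (jetsAt w x (i + 1)) x := fun i => by
    simp only [jetsAt, iteratedDeriv_succ]
    exact ((hw.differentiable_iteratedDeriv i
      (WithTop.coe_lt_coe.2 (ENat.natCast_lt_top i))) x).hasDerivAt
  have := h.hasDerivAt_comp (hasDerivAt_id x) (hasDerivAt_const x t) fun i _ => hjet i
  rw [h.totalDerXT_apply]
  simpa using this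

lemma SmoothOfOrder.iteratedDeriv_jetsAt (h : SmoothOfOrder ℓ D) {w : ℝ → ℝ}
    (hw : ContDiff ℝ ∞ w) (j : ℕ) (x t : ℝ) :
    iteratedDeriv j (fun y => D y t (jetsAt w y)) x = totalDerXT^[j] D x t (jetsAt w x) := by
  induction j generalizing x with
  | zero => simp
  | succ j ih =>
    rw [iteratedDeriv_succ, funext ih, Function.iterate_succ_apply']
    exact ((smoothOfOrder_totalDerXT_iterate h j).hasDerivAt_jetsAt hw x t).deriv

lemma SmoothOfOrder.deriv_jetsAt_of_flow {F : Density} {L : ℕ} (hD : SmoothOfOrder L D)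
    (hF : SmoothOfOrder ℓ F) {u : ℝ → ℝ → ℝ} (hu : ContDiff ℝ ∞ fun z : ℝ × ℝ => u z.1 z.2)
    {t : ℝ} (hflow : ∀ y, deriv (fun τ => u y τ) t = F y t (jetsAt (fun z => u z t) y))
    (x : ℝ) :
    deriv (fun τ => D x τ (jetsAt (fun z => u z τ) x)) t
      = partialT D x t (jetsAt (fun z => u z t) x)
        + linearization L D F x t (jetsAt (fun z => u z t) x) := by
  have hslice : ContDiff ℝ ∞ fun z => u z t := hu.comp (contDiff_id.prodMk contDiff_const)
  have := hD.hasDerivAt_comp (V := fun τ => jetsAt (fun z => u z τ) x) (hasDerivAt_const t x)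
    (hasDerivAt_id' t) fun i _ => hu.hasDerivAt_iteratedDeriv_fst_slice i x t
  simp only [zero_mul, one_mul, zero_add, funext hflow, hF.iteratedDeriv_jetsAt hslice] at this
  rw [this.deriv, linearization, Finset.sum_apply, Finset.sum_apply, Finset.sum_apply,
    ← Fin.sum_univ_eq_sum_range]
  simp only [Pi.mul_apply, mul_comm]

lemma linearization_jetsAt {a φ : Density} {L : ℕ} (ha : SmoothOfOrder L a)
    (hφ : SmoothOfOrder ℓ φ) {w : ℝ → ℝ} (hw : ContDiff ℝ ∞ w) (x t : ℝ) :
    linearization L a φ x t (jetsAt w x) = ∑' i, partialJet i a x t (jetsAt w x)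
      * iteratedDeriv i (fun y => φ y t (jetsAt w y)) x := by
  rw [tsum_eq_sum (s := range L) fun i hi => by
    rw [congr_fun₃ (ha.partialJet_of_le (by simpa using hi)) x t (jetsAt w x), Pi.zero_apply,
      Pi.zero_apply, Pi.zero_apply, zero_mul]]
  simp only [linearization, Finset.sum_apply, Pi.mul_apply, hφ.iteratedDeriv_jetsAt hw]

end Solution

section OfJet

lemma ofJet_apply (P : (ℕ → ℝ) → ℝ) (x t : ℝ) (v : ℕ → ℝ) : ofJet P x t v = P v := rfl

lemma partialJet_ofJet (P : (ℕ → ℝ) → ℝ) (k : ℕ) :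
    partialJet k (ofJet P) = ofJet (pderivJet P k) := rfl

lemma totalDerXT_ofJet (P : (ℕ → ℝ) → ℝ) : totalDerXT (ofJet P) = ofJet (totalDer P) := by
  ext x t v
  change deriv (fun _ => P v) x + _ = _
  rw [deriv_const, zero_add]
  rfl

lemma eulerOpXT_ofJet (P : (ℕ → ℝ) → ℝ) : EulerOpXT (ofJet P) = ofJet (EulerOp P) := by
  have hiter (k : ℕ) (Q : (ℕ → ℝ) → ℝ) :
      totalDerXT^[k] (ofJet Q) = ofJet (totalDer^[k] Q) :=
    (Function.Semiconj.iterate_right (fun Q => (totalDerXT_ofJet Q).symm) k Q).symm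
  ext x t v
  exact tsum_congr fun k => by
    rw [show (fun x' t' w => pderivJet (ofJet P x' t') k w) = ofJet (pderivJet P k) from rfl, hiter]
    rfl

end OfJet

end Density

open Density in
/-- Theorem 4.1, Gel'fand–Dikii/Lax type: the variational derivative of a
(possibly x,t-dependent) local functional, evaluated along a solution of a Hamiltonian
PDE, satisfies a linear PDE whose forcing term is the total time derivative of the
functional. -/
theorem variational_derivative_satisfies_linear_pde
    (n m : ℕ)
    (hden : (Fin n → ℝ) → ℝ)
    (mden : ℝ → ℝ → (Fin m → ℝ) → ℝ)
    (hsmooth : ContDiff ℝ (⊤ : ℕ∞) hden)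
    (msmooth : ContDiff ℝ (⊤ : ℕ∞) fun z : ℝ × ℝ × (Fin m → ℝ) => mden z.1 z.2.1 z.2.2)
    (H : (ℕ → ℝ) → ℝ) (Hdef : ∀ v, H v = hden fun i => v i)
    (M : ℝ → ℝ → (ℕ → ℝ) → ℝ) (Mdef : ∀ x t v, M x t v = mden x t fun i => v i)
    (u : ℝ → ℝ → ℝ)
    (hu : ContDiff ℝ (⊤ : ℕ∞) fun z : ℝ × ℝ => u z.1 z.2)
    (hpde : ∀ x t, deriv (fun τ => u x τ) t
      = deriv (fun y => EulerOp H (jetsAt (fun z => u z t) y)) x)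
    (Mfun : ℝ → ℝ → ℝ)
    (hMfun : ∀ x t, Mfun x t = EulerOpXT M x t (jetsAt (fun z => u z t) x))
    (Afun : ℕ → ℝ → ℝ → ℝ)
    (hAfun : ∀ i x t, Afun i x t = pderivJet (EulerOp H) i (jetsAt (fun z => u z t) x))
    (Rfun : ℝ → ℝ → ℝ)
    (hRfun : ∀ x t, Rfun x t
      = deriv (fun τ => EulerOpXT M x τ (jetsAt (fun z => u z t) x)) t
        + EulerOpXT (fun x' t' w => EulerOpXT M x' t' w * totalDer (EulerOp H) w) x t
            (jetsAt (fun z => u z t) x)) :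
    ∀ x t, deriv (fun τ => Mfun x τ) t
      = (∑' i : ℕ, Afun i x t * iteratedDeriv (i + 1) (fun y => Mfun y t) x) + Rfun x t := by
  intro x t
  have hslice : ContDiff ℝ ∞ fun z => u z t := hu.comp (contDiff_id.prodMk contDiff_const)
  obtain ⟨ℓ, hM, hH⟩ : ∃ ℓ, SmoothOfOrder ℓ M ∧ SmoothOfOrder ℓ (ofJet H) :=
    ⟨max m n, SmoothOfOrder.mono ⟨_, msmooth, Mdef⟩ (le_max_left m n),
      SmoothOfOrder.mono ⟨_, hsmooth.comp contDiff_snd.snd, fun _ _ v => Hdef v⟩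
        (le_max_right m n)⟩
  have hm := smoothOfOrder_eulerOpXT hM
  have hh := smoothOfOrder_eulerOpXT hH
  have hflow (y : ℝ) : deriv (fun τ => u y τ) t
      = totalDerXT (EulerOpXT (ofJet H)) y t (jetsAt (fun z => u z t) y) := by
    rw [hpde, eulerOpXT_ofJet]
    exact ((eulerOpXT_ofJet H ▸ hh).hasDerivAt_jetsAt hslice y t).deriv
  have hderM : deriv (fun y => EulerOpXT M y t (jetsAt (fun z => u z t) y))
      = fun y => totalDerXT (EulerOpXT M) y t (jetsAt (fun z => u z t) y) :=
    funext fun y => (hm.hasDerivAt_jetsAt hslice y t).deriv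
  have hprod : (fun x' t' w => EulerOpXT M x' t' w * totalDer (EulerOp H) w)
      = EulerOpXT M * totalDerXT (EulerOpXT (ofJet H)) := by
    rw [eulerOpXT_ofJet, totalDerXT_ofJet]
    rfl
  simp only [hMfun, hAfun, hRfun, iteratedDeriv_succ', hderM, hprod]
  rw [(hm.mono (Nat.le_succ _)).deriv_jetsAt_of_flow (smoothOfOrder_totalDerXT hh) hu hflow,
    linearization_eulerOpXT_totalDerXT hM hH (Nat.lt_succ_self _), Pi.add_apply, Pi.add_apply,
    Pi.add_apply, linearization_jetsAt (hh.mono (Nat.le_succ _)) (smoothOfOrder_totalDerXT hm)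
      hslice]
  simp only [eulerOpXT_ofJet, partialJet_ofJet, ofJet_apply, partialT]
  ring
end
end

section
/- Let h be a smooth real function and let N ≥ 1, T > 0, δ > 0. Let u(x,t,ε), σ(x,t,ε), G(x,t,ε), R(x,t,ε) be continuous functions, with u and σ continuously differentiable in x and t, defined on a region of the (x,t)-plane for each ε² ≤ δ², and suppose σ satisfies ∂_tσ = h''(u)·∂_xσ + ε²·G + ε^{2N+2}·R there, with σ(x,0,ε) = 0. Let x₁(t;ε) < x₂(t;ε) solve dxᵢ/dt = −h''(u(xᵢ(t),t,ε)) with x₁(0) < x₂(0), and let Π be the set of (x,t,ε) with x ∈ [x₁(t,ε), x₂(t,ε)], t ∈ [0,T], ε² ≤ δ², assumed contained in the domain of the equation. Suppose A = sup_{(x,t,ε),(y,s,η) ∈ Π}|x−y|^{1/2}, B = sup_Π|G|, C = sup_Π|R|, and D = sup_Π|h'''(u)·u_x| are finite, with D > 0. Then for all t ∈ [0,T] and ε² ≤ δ²: (∫_{x₁(t;ε)}^{x₂(t;ε)} σ(x,t,ε)² dx)^{1/2} ≤ ε²·A·(B + ε^{2N}·C)·(e^{DT} − 1)/D. -/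
/-!
Put `F(t) = ∫_{x₁(t)}^{x₂(t)} σ² dx`. Differentiating under the integral sign produces the boundary
terms `σ²(x₂) x₂' - σ²(x₁) x₁'`; integrating `h''(u) ∂ₓ(σ²)` by parts produces the same terms with
the opposite sign, since the endpoints move with speed `-h''(u)`. Hence
`F' = ∫ (2σ(ε²G + ε^{2N+2}R) - ∂ₓ(h''(u)) σ²)`, and with `|∂ₓ(h''(u))| ≤ D`, the bound
`ε²(B + ε^{2N}C)` on the source and the Cauchy–Schwarz bound `∫ |σ| ≤ A √F` this gives
`(√F)' ≤ D √F + A ε²(B + ε^{2N}C)`. Since `F(0) = 0`, Grönwall's inequality yields the estimate.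
-/

open Set Function Filter Topology MeasureTheory intervalIntegral

theorem ContDiff.uncurry_right {𝕜 E F G : Type*} [NontriviallyNormedField 𝕜]
    [NormedAddCommGroup E] [NormedSpace 𝕜 E] [NormedAddCommGroup F] [NormedSpace 𝕜 F]
    [NormedAddCommGroup G] [NormedSpace 𝕜 G] {n : WithTop ℕ∞} {f : E → F → G}
    (hf : ContDiff 𝕜 n (uncurry f)) (y : F) : ContDiff 𝕜 n fun x => f x y :=
  hf.comp (contDiff_id.prodMk contDiff_const)

section Partial

variable {f : ℝ → ℝ → ℝ}

theorem ContDiff.hasDerivAt_partial_snd (hf : ContDiff ℝ 1 (uncurry f)) (x t : ℝ) :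
    HasDerivAt (f x ·) (fderiv ℝ (uncurry f) (x, t) (0, 1)) t :=
  (hf.differentiable one_ne_zero (x, t)).hasFDerivAt.comp_hasDerivAt t
    ((hasDerivAt_const t x).prodMk (hasDerivAt_id t))

theorem ContDiff.continuous_deriv_partial_snd (hf : ContDiff ℝ 1 (uncurry f)) :
    Continuous (uncurry fun x t => deriv (f x ·) t) :=
  ((hf.continuous_fderiv one_ne_zero).clm_apply continuous_const).congr fun p =>
    (hf.hasDerivAt_partial_snd p.1 p.2).deriv.symm

end Partial

section Leibniz

variable {g : ℝ → ℝ → ℝ}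

theorem hasDerivAt_intervalIntegral_of_contDiff (hg : ContDiff ℝ 1 (uncurry g)) (a b t₀ : ℝ) :
    HasDerivAt (fun t => ∫ x in a..b, g x t) (∫ x in a..b, deriv (g x ·) t₀) t₀ := by
  have hg' := hg.continuous_deriv_partial_snd
  obtain ⟨M, hM⟩ := (isCompact_uIcc.prod (isCompact_closedBall t₀ 1)).exists_bound_of_continuousOn
    hg'.continuousOn
  refine (hasDerivAt_integral_of_dominated_loc_of_deriv_le (bound := fun _ => M)
    (Metric.ball_mem_nhds t₀ one_pos)
    (.of_forall fun t => (hg.continuous.uncurry_right t).aestronglyMeasurable)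
    ((hg.continuous.uncurry_right t₀).intervalIntegrable _ _)
    (hg'.uncurry_right t₀).aestronglyMeasurable
    (.of_forall fun x hx t ht => hM (x, t) ⟨uIoc_subset_uIcc hx, Metric.ball_subset_closedBall ht⟩)
    intervalIntegrable_const
    (.of_forall fun x _ t _ => (hg.hasDerivAt_partial_snd x t).differentiableAt.hasDerivAt)).2

theorem hasStrictFDerivAt_uncurry_primitive (hg : ContDiff ℝ 1 (uncurry g)) (c : ℝ)
    (p : ℝ × ℝ) :
    HasStrictFDerivAt (uncurry fun s t => ∫ x in c..s, g x t)
      ((ContinuousLinearMap.toSpanSingleton ℝ (g p.1 p.2)).coprod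
        (ContinuousLinearMap.toSpanSingleton ℝ (∫ x in c..p.1, deriv (g x ·) p.2))) p := by
  refine hasStrictFDerivAt_uncurry_coprod (u := p) (f := fun s t => ∫ x in c..s, g x t)
    (f₁ := fun s t => ContinuousLinearMap.toSpanSingleton ℝ (g s t))
    (f₂ := fun s t => ContinuousLinearMap.toSpanSingleton ℝ (∫ x in c..s, deriv (g x ·) t))
    (.of_forall fun q => ?_) (.of_forall fun q => ?_) ?_ ?_
  · exact ((hg.continuous.uncurry_right q.2).integral_hasStrictDerivAt c q.1).hasDerivAt.hasFDerivAt
  · exact (hasDerivAt_intervalIntegral_of_contDiff hg c q.1 q.2).hasFDerivAt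
  · exact (ContinuousLinearMap.toSpanSingletonCLE.continuous.comp hg.continuous).continuousAt
  · exact (ContinuousLinearMap.toSpanSingletonCLE.continuous.comp
      (continuous_parametric_intervalIntegral_of_continuous (a₀ := c)
        (f := fun (q : ℝ × ℝ) x => deriv (g x ·) q.2)
        (hg.continuous_deriv_partial_snd.comp (continuous_snd.prodMk
          (continuous_snd.comp continuous_fst))) continuous_fst)).continuousAt

theorem hasDerivAt_intervalIntegral_leibniz (hg : ContDiff ℝ 1 (uncurry g)) {a b : ℝ → ℝ}
    {a' b' t₀ : ℝ} (ha : HasDerivAt a a' t₀) (hb : HasDerivAt b b' t₀) :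
    HasDerivAt (fun t => ∫ x in a t..b t, g x t)
      (g (b t₀) t₀ * b' - g (a t₀) t₀ * a' + ∫ x in a t₀..b t₀, deriv (g x ·) t₀) t₀ := by
  have hP {e : ℝ → ℝ} {e' : ℝ} (he : HasDerivAt e e' t₀) :
      HasDerivAt (fun t => ∫ x in a t₀..e t, g x t)
        (g (e t₀) t₀ * e' + ∫ x in a t₀..e t₀, deriv (g x ·) t₀) t₀ := by
    have h := (hasStrictFDerivAt_uncurry_primitive hg (a t₀) (e t₀, t₀)).hasFDerivAt.comp_hasDerivAt
      (f := fun t => (e t, t)) t₀ (he.prodMk (hasDerivAt_id' t₀))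
    exact h.congr_deriv (by simp [mul_comm])
  have hslice (t s s' : ℝ) : IntervalIntegrable (g · t) volume s s' :=
    (hg.continuous.uncurry_right t).intervalIntegrable _ _
  refine (((hP hb).sub (hP ha)).congr_deriv (by rw [integral_same]; ring)).congr_of_eventuallyEq
    (.of_forall fun t => ?_)
  exact (integral_interval_sub_left (hslice t _ _) (hslice t _ _)).symm

end Leibniz

theorem hasDerivAt_intervalIntegral_of_transport {w c : ℝ → ℝ → ℝ} {f a b : ℝ → ℝ} {t₀ : ℝ}
    (hw : ContDiff ℝ 1 (uncurry w)) (hc : ContDiff ℝ 1 (c · t₀))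
    (hf : IntervalIntegrable f volume (a t₀) (b t₀))
    (ha : HasDerivAt a (-c (a t₀) t₀) t₀) (hb : HasDerivAt b (-c (b t₀) t₀) t₀)
    (hpde : ∀ x ∈ uIcc (a t₀) (b t₀), deriv (w x ·) t₀ = c x t₀ * deriv (w · t₀) x + f x) :
    HasDerivAt (fun t => ∫ x in a t..b t, w x t)
      (∫ x in a t₀..b t₀, (f x - deriv (c · t₀) x * w x t₀)) t₀ := by
  have hw₀ := hw.uncurry_right t₀
  have ibp := integral_mul_deriv_eq_deriv_mul
    (fun x _ => (hc.differentiable one_ne_zero x).hasDerivAt)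
    (fun x _ => (hw₀.differentiable one_ne_zero x).hasDerivAt)
    ((hc.continuous_deriv le_rfl).intervalIntegrable (a t₀) (b t₀))
    ((hw₀.continuous_deriv le_rfl).intervalIntegrable (a t₀) (b t₀))
  refine (hasDerivAt_intervalIntegral_leibniz hw ha hb).congr_deriv ?_
  rw [integral_congr hpde, integral_add _ hf, ibp, integral_sub hf]
  · ring
  · exact ((hc.continuous_deriv le_rfl).mul hw₀.continuous).intervalIntegrable _ _
  · exact (hc.continuous.mul (hw₀.continuous_deriv le_rfl)).intervalIntegrable _ _

theorem hasDerivAt_intervalIntegral_sq_of_transport {σ c : ℝ → ℝ → ℝ} {S a b : ℝ → ℝ} {t₀ : ℝ}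
    (hσ : ContDiff ℝ 1 (uncurry σ)) (hc : ContDiff ℝ 1 (c · t₀))
    (hS : ContinuousOn S (uIcc (a t₀) (b t₀)))
    (ha : HasDerivAt a (-c (a t₀) t₀) t₀) (hb : HasDerivAt b (-c (b t₀) t₀) t₀)
    (hpde : ∀ x ∈ uIcc (a t₀) (b t₀), deriv (σ x ·) t₀ = c x t₀ * deriv (σ · t₀) x + S x) :
    HasDerivAt (fun t => ∫ x in a t..b t, σ x t ^ 2)
      (∫ x in a t₀..b t₀, (2 * σ x t₀ * S x - deriv (c · t₀) x * σ x t₀ ^ 2)) t₀ := by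
  have hσ₀ := hσ.uncurry_right t₀
  refine hasDerivAt_intervalIntegral_of_transport (w := fun x t => σ x t ^ 2) (hσ.pow 2) hc
    ((continuous_const.mul hσ₀.continuous).continuousOn.mul hS).intervalIntegrable ha hb
    fun x hx => ?_
  rw [((hσ.hasDerivAt_partial_snd x t₀).differentiableAt.hasDerivAt.fun_pow 2).deriv,
    ((hσ₀.differentiable one_ne_zero x).hasDerivAt.fun_pow 2).deriv, hpde x hx]
  ring

theorem integral_abs_le_mul_of_integral_sq_le {f : ℝ → ℝ} {a b A E : ℝ} (hab : a ≤ b)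
    (hf : ContinuousOn f (Icc a b)) (hA : 0 < A) (hE : 0 < E) (hL : b - a ≤ A ^ 2)
    (hI : ∫ x in a..b, f x ^ 2 ≤ E ^ 2) :
    ∫ x in a..b, |f x| ≤ A * E := by
  have hf2 : IntervalIntegrable (fun x => f x ^ 2) volume a b :=
    (hf.pow 2).intervalIntegrable_of_Icc hab
  -- AM-GM: `2 A E |f| ≤ A² f² + E²`
  have hpt : ∀ x ∈ Icc a b, |f x| ≤ A / (2 * E) * f x ^ 2 + E / (2 * A) := fun x _ => by
    rw [div_mul_eq_mul_div, div_add_div _ _ (by positivity) (by positivity),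
      le_div_iff₀ (by positivity)]
    nlinarith [sq_nonneg (A * |f x| - E), sq_abs (f x)]
  calc ∫ x in a..b, |f x|
      ≤ ∫ x in a..b, (A / (2 * E) * f x ^ 2 + E / (2 * A)) :=
        integral_mono_on hab (hf.abs.intervalIntegrable_of_Icc hab)
          ((hf2.const_mul _).add intervalIntegrable_const) hpt
    _ = A / (2 * E) * (∫ x in a..b, f x ^ 2) + E / (2 * A) * (b - a) := by
        rw [integral_add (hf2.const_mul _) intervalIntegrable_const,
          intervalIntegral.integral_const_mul, intervalIntegral.integral_const, smul_eq_mul]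
        ring
    _ ≤ A / (2 * E) * E ^ 2 + E / (2 * A) * A ^ 2 := by gcongr
    _ = A * E := by field_simp; ring

theorem integral_two_mul_sub_mul_sq_le {f s κ : ℝ → ℝ} {a b A E D K : ℝ} (hab : a ≤ b)
    (hf : ContinuousOn f (Icc a b)) (hs : ContinuousOn s (Icc a b))
    (hκ : ContinuousOn κ (Icc a b)) (hsK : ∀ x ∈ Icc a b, |s x| ≤ K)
    (hκD : ∀ x ∈ Icc a b, |κ x| ≤ D) (hA : 0 < A) (hE : 0 < E) (hL : b - a ≤ A ^ 2)
    (hI : ∫ x in a..b, f x ^ 2 ≤ E ^ 2) :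
    ∫ x in a..b, (2 * f x * s x - κ x * f x ^ 2) ≤ 2 * (D * E + K * A) * E := by
  have hK : 0 ≤ K := (abs_nonneg _).trans (hsK a ⟨le_rfl, hab⟩)
  have hD : 0 ≤ D := (abs_nonneg _).trans (hκD a ⟨le_rfl, hab⟩)
  have habs : IntervalIntegrable (fun x => |f x|) volume a b := hf.abs.intervalIntegrable_of_Icc hab
  have hf2 : IntervalIntegrable (fun x => f x ^ 2) volume a b :=
    (hf.pow 2).intervalIntegrable_of_Icc hab
  have hpt : ∀ x ∈ Icc a b, 2 * f x * s x - κ x * f x ^ 2 ≤ 2 * K * |f x| + D * f x ^ 2 :=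
    fun x hx => by
      have h1 : f x * s x ≤ |f x| * K :=
        calc f x * s x ≤ |f x * s x| := le_abs_self _
          _ = |f x| * |s x| := abs_mul _ _
          _ ≤ |f x| * K := mul_le_mul_of_nonneg_left (hsK x hx) (abs_nonneg _)
      have h2 : -κ x * f x ^ 2 ≤ D * f x ^ 2 :=
        mul_le_mul_of_nonneg_right ((neg_le_abs _).trans (hκD x hx)) (sq_nonneg _)
      linarith
  calc ∫ x in a..b, (2 * f x * s x - κ x * f x ^ 2)
      ≤ ∫ x in a..b, (2 * K * |f x| + D * f x ^ 2) :=
        integral_mono_on hab (((continuousOn_const.mul hf).mul hs).sub (hκ.mul (hf.pow 2))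
          |>.intervalIntegrable_of_Icc hab) ((habs.const_mul _).add (hf2.const_mul _)) hpt
    _ = 2 * K * (∫ x in a..b, |f x|) + D * ∫ x in a..b, f x ^ 2 := by
        rw [integral_add (habs.const_mul _) (hf2.const_mul _), intervalIntegral.integral_const_mul,
          intervalIntegral.integral_const_mul]
    _ ≤ 2 * K * (A * E) + D * E ^ 2 := by
        gcongr
        exact integral_abs_le_mul_of_integral_sq_le hab hf hA hE hL hI
    _ ≤ 2 * (D * E + K * A) * E := by nlinarith [mul_nonneg hD (sq_nonneg E)]

theorem sqrt_le_gronwallBound_of_deriv_le {F F' : ℝ → ℝ} {a b δ D M : ℝ}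
    (hF : ContinuousOn F (Icc a b)) (hF' : ∀ t ∈ Ico a b, HasDerivWithinAt F (F' t) (Ici t) t)
    (hF_nonneg : ∀ t ∈ Icc a b, 0 ≤ F t) (ha : √(F a) ≤ δ)
    (bound : ∀ t ∈ Ico a b, ∀ E > 0, F t ≤ E ^ 2 → F' t ≤ 2 * (D * E + M) * E) :
    ∀ t ∈ Icc a b, √(F t) ≤ gronwallBound δ D M (t - a) := by
  intro t ht
  -- Grönwall for the regularization `√(F + c²)`, which is differentiable, then `c → 0`.
  have hreg : ∀ c > 0, √(F t) ≤ gronwallBound (δ + c) D M (t - a) := by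
    intro c hc
    have hpos : ∀ τ ∈ Icc a b, 0 < F τ + c ^ 2 := fun τ hτ => by
      have := hF_nonneg τ hτ; positivity
    have hE : ∀ τ ∈ Ico a b, HasDerivWithinAt (fun τ => √(F τ + c ^ 2))
        (F' τ / (2 * √(F τ + c ^ 2))) (Ici τ) τ := fun τ hτ =>
      ((hF' τ hτ).add_const (c ^ 2)).sqrt (hpos τ (Ico_subset_Icc_self hτ)).ne'
    have hEa : √(F a + c ^ 2) ≤ δ + c := by
      have := hF_nonneg a (left_mem_Icc.2 (ht.1.trans ht.2))
      rw [Real.sqrt_le_iff]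
      constructor
      · linarith [Real.sqrt_nonneg (F a)]
      · nlinarith [Real.sq_sqrt this, Real.sqrt_nonneg (F a)]
    have hbound : ∀ τ ∈ Ico a b, F' τ / (2 * √(F τ + c ^ 2)) ≤ D * √(F τ + c ^ 2) + M := by
      intro τ hτ
      have hτ' := Ico_subset_Icc_self hτ
      have hsqrt := Real.sqrt_pos.2 (hpos τ hτ')
      rw [div_le_iff₀ (by positivity)]
      refine (bound τ hτ _ hsqrt ?_).trans_eq (by ring)
      rw [Real.sq_sqrt (hpos τ hτ').le]
      exact le_add_of_nonneg_right (sq_nonneg c)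
    calc √(F t) ≤ √(F t + c ^ 2) := Real.sqrt_le_sqrt (le_add_of_nonneg_right (sq_nonneg c))
      _ ≤ gronwallBound (δ + c) D M (t - a) :=
        le_gronwallBound_of_liminf_deriv_right_le
          ((hF.add continuousOn_const).sqrt) (fun τ hτ _ hr => (hE τ hτ).liminf_right_slope_le hr)
          hEa hbound t ht
  have hcont : Continuous fun c => gronwallBound (δ + c) D M (t - a) := by
    unfold gronwallBound; split_ifs <;> fun_prop
  have hlim := (hcont.tendsto 0).mono_left (nhdsWithin_le_nhds (s := Ioi 0))
  rw [add_zero] at hlim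
  exact ge_of_tendsto hlim (eventually_nhdsWithin_of_forall hreg)

theorem abs_sq_mul_add_pow_mul_le {ε g r B C : ℝ} (N : ℕ) (hg : |g| ≤ B) (hr : |r| ≤ C) :
    |ε ^ 2 * g + ε ^ (2 * N + 2) * r| ≤ ε ^ 2 * (B + ε ^ (2 * N) * C) := by
  have hε : 0 ≤ ε ^ (2 * N) := by rw [pow_mul]; positivity
  calc |ε ^ 2 * g + ε ^ (2 * N + 2) * r| ≤ ε ^ 2 * |g| + ε ^ 2 * (ε ^ (2 * N) * |r|) := by
        refine (abs_add_le _ _).trans_eq ?_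
        rw [pow_add, abs_mul, abs_mul, abs_mul, abs_of_nonneg (sq_nonneg ε), abs_of_nonneg hε]
        ring
    _ ≤ ε ^ 2 * (B + ε ^ (2 * N) * C) := by
        rw [← mul_add]
        gcongr

theorem deriv_iteratedDeriv_comp {h v : ℝ → ℝ} {n : ℕ} {x : ℝ}
    (hh : DifferentiableAt ℝ (iteratedDeriv n h) (v x)) (hv : DifferentiableAt ℝ v x) :
    deriv (fun y => iteratedDeriv n h (v y)) x = iteratedDeriv (n + 1) h (v x) * deriv v x := by
  rw [iteratedDeriv_succ]
  exact deriv_comp x hh hv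

theorem sqrt_integral_sq_le_gronwallBound_of_transport {σ c S : ℝ → ℝ → ℝ} {a b : ℝ → ℝ}
    {T A D K : ℝ} (hσ : ContDiff ℝ 1 (uncurry σ)) (hc : ∀ t, ContDiff ℝ 1 (c · t))
    (hS : ∀ t, Continuous (S · t))
    (ha : ∀ t ∈ Icc 0 T, HasDerivAt a (-c (a t) t) t)
    (hb : ∀ t ∈ Icc 0 T, HasDerivAt b (-c (b t) t) t) (hab : ∀ t ∈ Icc 0 T, a t ≤ b t)
    (hpde : ∀ t ∈ Icc 0 T, ∀ x ∈ Icc (a t) (b t),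
      deriv (σ x ·) t = c x t * deriv (σ · t) x + S x t)
    (hinit : ∀ x, σ x 0 = 0) (hA : 0 < A) (hwidth : ∀ t ∈ Icc 0 T, b t - a t ≤ A ^ 2)
    (hSK : ∀ t ∈ Icc 0 T, ∀ x ∈ Icc (a t) (b t), |S x t| ≤ K)
    (hcD : ∀ t ∈ Icc 0 T, ∀ x ∈ Icc (a t) (b t), |deriv (c · t) x| ≤ D) :
    ∀ t ∈ Icc 0 T, √(∫ x in a t..b t, σ x t ^ 2) ≤ gronwallBound 0 D (K * A) t := by
  have hF : ∀ t ∈ Icc 0 T, HasDerivAt (fun t => ∫ x in a t..b t, σ x t ^ 2)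
      (∫ x in a t..b t, (2 * σ x t * S x t - deriv (c · t) x * σ x t ^ 2)) t := fun t ht =>
    hasDerivAt_intervalIntegral_sq_of_transport hσ (hc t) (hS t).continuousOn (ha t ht) (hb t ht)
      fun x hx => hpde t ht x (uIcc_of_le (hab t ht) ▸ hx)
  intro t ht
  simpa using sqrt_le_gronwallBound_of_deriv_le (δ := 0)
    (fun τ hτ => (hF τ hτ).continuousAt.continuousWithinAt)
    (fun τ hτ => (hF τ (Ico_subset_Icc_self hτ)).hasDerivWithinAt)
    (fun τ hτ => integral_nonneg (hab τ hτ) fun _ _ => sq_nonneg _) (by simp [hinit])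
    (fun τ hτ E hE hFE => by
      have hτ' := Ico_subset_Icc_self hτ
      exact integral_two_mul_sub_mul_sq_le (hab τ hτ') (hσ.uncurry_right τ).continuous.continuousOn
        (hS τ).continuousOn ((hc τ).continuous_deriv le_rfl).continuousOn (hSK τ hτ')
        (hcD τ hτ') hA hE (hwidth τ hτ') hFE) t ht

theorem gronwall_estimate_on_deformed_characteristics_general
    (h : ℝ → ℝ) (hh : ContDiff ℝ (⊤ : ℕ∞) h)
    (N : ℕ) (T δ : ℝ)
    (u σ G R : ℝ → ℝ → ℝ → ℝ)
    (x₁ x₂ : ℝ → ℝ → ℝ)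
    (hu : ∀ ε : ℝ, ContDiff ℝ 1 fun z : ℝ × ℝ => u z.1 z.2 ε)
    (hσ : ∀ ε : ℝ, ContDiff ℝ 1 fun z : ℝ × ℝ => σ z.1 z.2 ε)
    (hG : ∀ ε : ℝ, Continuous fun z : ℝ × ℝ => G z.1 z.2 ε)
    (hR : ∀ ε : ℝ, Continuous fun z : ℝ × ℝ => R z.1 z.2 ε)
    (Pset : Set (ℝ × ℝ × ℝ))
    (hPset : Pset = {z : ℝ × ℝ × ℝ | z.2.1 ∈ Set.Icc 0 T ∧ z.2.2^2 ≤ δ^2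
      ∧ z.1 ∈ Set.Icc (x₁ z.2.1 z.2.2) (x₂ z.2.1 z.2.2)})
    (hode₁ : ∀ ε : ℝ, ε^2 ≤ δ^2 → ∀ t ∈ Set.Icc (0:ℝ) T,
      HasDerivAt (fun τ => x₁ τ ε) (-(iteratedDeriv 2 h (u (x₁ t ε) t ε))) t)
    (hode₂ : ∀ ε : ℝ, ε^2 ≤ δ^2 → ∀ t ∈ Set.Icc (0:ℝ) T,
      HasDerivAt (fun τ => x₂ τ ε) (-(iteratedDeriv 2 h (u (x₂ t ε) t ε))) t)
    (hlt : ∀ ε : ℝ, ε^2 ≤ δ^2 → ∀ t ∈ Set.Icc (0:ℝ) T, x₁ t ε < x₂ t ε)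
    (heq : ∀ z ∈ Pset, deriv (fun τ => σ z.1 τ z.2.2) z.2.1
      = iteratedDeriv 2 h (u z.1 z.2.1 z.2.2) * deriv (fun y => σ y z.2.1 z.2.2) z.1
        + z.2.2^2 * G z.1 z.2.1 z.2.2 + z.2.2^(2*N+2) * R z.1 z.2.1 z.2.2)
    (hinit : ∀ x ε : ℝ, σ x 0 ε = 0)
    (A B C D : ℝ) (hD0 : 0 < D)
    (hA : ∀ z ∈ Pset, ∀ w ∈ Pset, Real.sqrt |z.1 - w.1| ≤ A)
    (hB : ∀ z ∈ Pset, |G z.1 z.2.1 z.2.2| ≤ B)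
    (hC : ∀ z ∈ Pset, |R z.1 z.2.1 z.2.2| ≤ C)
    (hD : ∀ z ∈ Pset, |iteratedDeriv 3 h (u z.1 z.2.1 z.2.2)
      * deriv (fun y => u y z.2.1 z.2.2) z.1| ≤ D) :
    ∀ t ∈ Set.Icc (0:ℝ) T, ∀ ε : ℝ, ε^2 ≤ δ^2 →
      Real.sqrt (∫ x in (x₁ t ε)..(x₂ t ε), (σ x t ε)^2)
        ≤ ε^2 * A * (B + ε^(2*N) * C) * (Real.exp (D * T) - 1) / D := by
  intro t ht ε hε
  have hu' : ContDiff ℝ 1 (uncurry fun x t => u x t ε) := hu ε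
  have hG' : Continuous (uncurry fun x t => G x t ε) := hG ε
  have hR' : Continuous (uncurry fun x t => R x t ε) := hR ε
  have hmem : ∀ τ ∈ Icc 0 T, ∀ x ∈ Icc (x₁ τ ε) (x₂ τ ε), (x, τ, ε) ∈ Pset :=
    fun τ hτ x hx => hPset ▸ ⟨hτ, hε, hx⟩
  have hlen : ∀ τ ∈ Icc 0 T, √|x₂ τ ε - x₁ τ ε| ≤ A := fun τ hτ =>
    hA _ (hmem τ hτ _ ⟨(hlt ε hε τ hτ).le, le_rfl⟩) _ (hmem τ hτ _ ⟨le_rfl, (hlt ε hε τ hτ).le⟩)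
  have hA0 : 0 < A :=
    (Real.sqrt_pos.2 (abs_pos.2 (sub_pos.2 (hlt ε hε t ht)).ne')).trans_le (hlen t ht)
  have h₂ : ContDiff ℝ 1 (iteratedDeriv 2 h) :=
    (contDiff_nat_succ_iff_contDiff_one_iteratedDeriv.1 (hh.of_le (WithTop.coe_le_coe.2 le_top))).2
  have hbound := sqrt_integral_sq_le_gronwallBound_of_transport (σ := fun x t => σ x t ε)
    (c := fun x t => iteratedDeriv 2 h (u x t ε))
    (S := fun x t => ε ^ 2 * G x t ε + ε ^ (2 * N + 2) * R x t ε)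
    (K := ε ^ 2 * (B + ε ^ (2 * N) * C))
    (hσ ε) (fun τ => h₂.comp (hu'.uncurry_right τ))
    (fun τ => ((hG'.uncurry_right τ).const_mul _).add ((hR'.uncurry_right τ).const_mul _))
    (hode₁ ε hε) (hode₂ ε hε) (fun τ hτ => (hlt ε hε τ hτ).le)
    (fun τ hτ x hx => by rw [heq (x, τ, ε) (hmem τ hτ x hx)]; ring) (hinit · ε) hA0
    (fun τ hτ => (le_abs_self _).trans (Real.sqrt_le_iff.1 (hlen τ hτ)).2)
    (fun τ hτ x hx => abs_sq_mul_add_pow_mul_le N (hB (x, τ, ε) (hmem τ hτ x hx))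
      (hC (x, τ, ε) (hmem τ hτ x hx)))
    (fun τ hτ x hx => deriv_iteratedDeriv_comp (h₂.differentiable one_ne_zero _)
      ((hu'.uncurry_right τ).differentiable one_ne_zero x) ▸ hD (x, τ, ε) (hmem τ hτ x hx)) t ht
  have hK : 0 ≤ ε ^ 2 * (B + ε ^ (2 * N) * C) * A := by
    have hx := hmem t ht _ ⟨le_rfl, (hlt ε hε t ht).le⟩
    have := (abs_nonneg _).trans (hB _ hx)
    have := (abs_nonneg _).trans (hC _ hx)
    have := (even_two_mul N).pow_nonneg ε
    positivity
  calc √(∫ x in x₁ t ε..x₂ t ε, σ x t ε ^ 2)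
      ≤ gronwallBound 0 D (ε ^ 2 * (B + ε ^ (2 * N) * C) * A) T :=
        hbound.trans (gronwallBound_mono le_rfl hK hD0.le ht.2)
    _ = ε ^ 2 * A * (B + ε ^ (2 * N) * C) * (Real.exp (D * T) - 1) / D := by
        rw [gronwallBound_of_K_ne_0 hD0.ne']
        ring

/-- the Grönwall-type L² estimate on intervals whose endpoints move along
the deformed characteristics `dxᵢ/dt = -h''(u(xᵢ(t),t,ε))`, for solutions of the linear
equation `∂_tσ = h''(u)∂_xσ + ε²G + ε^{2N+2}R` with zero initial data. -/
theorem gronwall_estimate_on_deformed_characteristics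
    (h : ℝ → ℝ) (hh : ContDiff ℝ (⊤ : ℕ∞) h)
    (N : ℕ) (hN : 1 ≤ N) (T δ : ℝ) (hT : 0 < T) (hδ : 0 < δ)
    (u σ G R : ℝ → ℝ → ℝ → ℝ)
    (x₁ x₂ : ℝ → ℝ → ℝ)
    (hu : ∀ ε : ℝ, ContDiff ℝ 1 fun z : ℝ × ℝ => u z.1 z.2 ε)
    (hσ : ∀ ε : ℝ, ContDiff ℝ 1 fun z : ℝ × ℝ => σ z.1 z.2 ε)
    (hG : ∀ ε : ℝ, Continuous fun z : ℝ × ℝ => G z.1 z.2 ε)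
    (hR : ∀ ε : ℝ, Continuous fun z : ℝ × ℝ => R z.1 z.2 ε)
    (Pset : Set (ℝ × ℝ × ℝ))
    (hPset : Pset = {z : ℝ × ℝ × ℝ | z.2.1 ∈ Set.Icc 0 T ∧ z.2.2^2 ≤ δ^2
      ∧ z.1 ∈ Set.Icc (x₁ z.2.1 z.2.2) (x₂ z.2.1 z.2.2)})
    (hode₁ : ∀ ε : ℝ, ε^2 ≤ δ^2 → ∀ t ∈ Set.Icc (0:ℝ) T,
      HasDerivAt (fun τ => x₁ τ ε) (-(iteratedDeriv 2 h (u (x₁ t ε) t ε))) t)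
    (hode₂ : ∀ ε : ℝ, ε^2 ≤ δ^2 → ∀ t ∈ Set.Icc (0:ℝ) T,
      HasDerivAt (fun τ => x₂ τ ε) (-(iteratedDeriv 2 h (u (x₂ t ε) t ε))) t)
    (hlt0 : ∀ ε : ℝ, ε^2 ≤ δ^2 → x₁ 0 ε < x₂ 0 ε)
    (hlt : ∀ ε : ℝ, ε^2 ≤ δ^2 → ∀ t ∈ Set.Icc (0:ℝ) T, x₁ t ε < x₂ t ε)
    (heq : ∀ z ∈ Pset, deriv (fun τ => σ z.1 τ z.2.2) z.2.1
      = iteratedDeriv 2 h (u z.1 z.2.1 z.2.2) * deriv (fun y => σ y z.2.1 z.2.2) z.1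
        + z.2.2^2 * G z.1 z.2.1 z.2.2 + z.2.2^(2*N+2) * R z.1 z.2.1 z.2.2)
    (hinit : ∀ x ε : ℝ, σ x 0 ε = 0)
    (A B C D : ℝ) (hD0 : 0 < D)
    (hA : ∀ z ∈ Pset, ∀ w ∈ Pset, Real.sqrt |z.1 - w.1| ≤ A)
    (hB : ∀ z ∈ Pset, |G z.1 z.2.1 z.2.2| ≤ B)
    (hC : ∀ z ∈ Pset, |R z.1 z.2.1 z.2.2| ≤ C)
    (hD : ∀ z ∈ Pset, |iteratedDeriv 3 h (u z.1 z.2.1 z.2.2)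
      * deriv (fun y => u y z.2.1 z.2.2) z.1| ≤ D) :
    ∀ t ∈ Set.Icc (0:ℝ) T, ∀ ε : ℝ, ε^2 ≤ δ^2 →
      Real.sqrt (∫ x in (x₁ t ε)..(x₂ t ε), (σ x t ε)^2)
        ≤ ε^2 * A * (B + ε^(2*N) * C) * (Real.exp (D * T) - 1) / D :=
  gronwall_estimate_on_deformed_characteristics_general h hh N T δ u σ G R x₁ x₂ hu hσ hG hR Pset
    hPset hode₁ hode₂ hlt heq hinit A B C D hD0 hA hB hC hD
end

section
/- Let h, c be smooth functions of one variable, set c_h = c·h''', and let v⁰(x,t) be a smooth solution of v⁰_t = h''(v⁰)·v⁰_x on ℝ×[0,T) satisfying 1 + t·h'''(v⁰(x,t))·v⁰_x(x,t) > 0 everywhere. Define v¹(x,t) = (t/2)·∂_x[ ((c·h''')'(v⁰)·(v⁰_x)² + 2·c(v⁰)·h'''(v⁰)·v⁰_xx + t·c(v⁰)·(h'''(v⁰))²·v⁰_x·v⁰_xx + t·c'(v⁰)·(h'''(v⁰))²·(v⁰_x)³) / (1 + t·h'''(v⁰)·v⁰_x)² ]. Then v¹ satisfies the first transport equation v¹_t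 = ∂_x( h''(v⁰)·v¹ + c_h(v⁰)·v⁰_xx + (1/2)·c_h'(v⁰)·(v⁰_x)² ) on ℝ×[0,T), together with the initial condition v¹(x,0) = 0. -/
/-!
Write `p = u_x`, `q = u_xx` for the solution `u` of `u_t = h''(u) u_x`, and `W = (t/2) N / D²`,
so that `v¹ = W_x`. Differentiating the equation in `x` (mixed partials commute up to the
boundary `t = 0`) shows that along the characteristic direction `∂_t - h''(u) ∂_x`
one has `u' = 0`, `p' = h'''(u) p²` and `q' = h''''(u) p³ + 3 h'''(u) p q`. The chain rule then
gives `W_t - h''(u) W_x = c_h(u) q + ½ c_h'(u) p²`, so `W_t` is the flux of the transport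
equation, and one more `x`-derivative, with the partials commuted again, gives the theorem.
-/

open Set

noncomputable section

open scoped ContDiff

theorem ContDiffOn.fderivWithin_fderivWithin_comm {E F : Type*} [NormedAddCommGroup E]
    [NormedSpace ℝ E] [NormedAddCommGroup F] [NormedSpace ℝ F] {f : E → F} {s : Set E} {x : E}
    (hf : ContDiffOn ℝ 2 f s) (hs : UniqueDiffOn ℝ s) (hx : x ∈ closure (interior s))
    (hxs : x ∈ s) (v w : E) :
    fderivWithin ℝ (fun y => fderivWithin ℝ f s y v) s x w
      = fderivWithin ℝ (fun y => fderivWithin ℝ f s y w) s x v := by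
  have hdiff : DifferentiableWithinAt ℝ (fderivWithin ℝ f s) s x :=
    (hf.fderivWithin hs (m := 1) le_rfl).differentiableOn one_ne_zero x hxs
  have happly (v w : E) : fderivWithin ℝ (fun y => fderivWithin ℝ f s y v) s x w
      = fderivWithin ℝ (fderivWithin ℝ f s) s x w v := by
    rw [fderivWithin_clm_apply (hs x hxs) hdiff (differentiableWithinAt_const v)]
    simp
  rw [happly, happly]
  exact (hf.contDiffWithinAt hxs).isSymmSndFDerivWithinAt (by simp) hs hx hxs w v

theorem ContDiff.contDiff_iteratedDeriv {𝕜 F : Type*} [NontriviallyNormedField 𝕜]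
    [NormedAddCommGroup F] [NormedSpace 𝕜 F] {f : 𝕜 → F} (hf : ContDiff 𝕜 ∞ f) (n : ℕ) :
    ContDiff 𝕜 ∞ (iteratedDeriv n f) := by
  rw [iteratedDeriv_eq_iterate]
  exact hf.iterate_deriv n

theorem ContDiff.hasDerivAt_iteratedDeriv {𝕜 F : Type*} [NontriviallyNormedField 𝕜]
    [NormedAddCommGroup F] [NormedSpace 𝕜 F] {f : 𝕜 → F} (hf : ContDiff 𝕜 ∞ f) (n : ℕ)
    (x : 𝕜) : HasDerivAt (iteratedDeriv n f) (iteratedDeriv (n + 1) f x) x := by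
  rw [iteratedDeriv_succ]
  exact ((hf.contDiff_iteratedDeriv n).differentiable (by simp) x).hasDerivAt

namespace Semiclassical

def partialX (f : ℝ × ℝ → ℝ) (z : ℝ × ℝ) : ℝ := deriv (fun y => f (y, z.2)) z.1

def partialT (I : Set ℝ) (f : ℝ × ℝ → ℝ) (z : ℝ × ℝ) : ℝ :=
  derivWithin (fun τ => f (z.1, τ)) I z.2

def lineThrough (z : ℝ × ℝ) (a τ : ℝ) : ℝ × ℝ := (z.1 + a * (τ - z.2), τ)

section Strip

variable {I : Set ℝ} {f g : ℝ × ℝ → ℝ} {z : ℝ × ℝ}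

@[simp]
theorem lineThrough_self (z : ℝ × ℝ) (a : ℝ) : lineThrough z a z.2 = z := by
  simp [lineThrough]

theorem iteratedDeriv_two_eq_partialX_partialX (f : ℝ × ℝ → ℝ) (x t : ℝ) :
    iteratedDeriv 2 (fun y => f (y, t)) x = partialX (partialX f) (x, t) := by
  rw [iteratedDeriv_succ, iteratedDeriv_one]
  rfl

theorem hasDerivAt_horizontal (hf : DifferentiableWithinAt ℝ f (univ ×ˢ I) z)
    (hz : z ∈ univ ×ˢ I) :
    HasDerivAt (fun y => f (y, z.2)) (fderivWithin ℝ f (univ ×ˢ I) z (1, 0)) z.1 := by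
  have hγ : HasDerivAt (fun y : ℝ => (y, z.2)) ((1 : ℝ), (0 : ℝ)) z.1 :=
    (hasDerivAt_id z.1).prodMk (hasDerivAt_const z.1 z.2)
  have := hf.hasFDerivWithinAt.comp_hasDerivWithinAt z.1 (hγ.hasDerivWithinAt (s := univ))
    fun y _ => (⟨mem_univ y, hz.2⟩ : (y, z.2) ∈ univ ×ˢ I)
  rwa [hasDerivWithinAt_univ] at this

theorem hasDerivWithinAt_lineThrough (hf : DifferentiableWithinAt ℝ f (univ ×ˢ I) z)
    (a : ℝ) : HasDerivWithinAt (f ∘ lineThrough z a) (fderivWithin ℝ f (univ ×ˢ I) z (a, 1))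
      I z.2 := by
  have hγ : HasDerivAt (lineThrough z a) (a, (1 : ℝ)) z.2 := by
    have := ((((hasDerivAt_id z.2).sub_const z.2).const_mul a).const_add z.1).prodMk
      (hasDerivAt_id z.2)
    unfold lineThrough
    simpa using this
  have := ((lineThrough_self z a).symm ▸ hf).hasFDerivWithinAt.comp_hasDerivWithinAt z.2
    hγ.hasDerivWithinAt fun τ hτ => (⟨mem_univ _, hτ⟩ : lineThrough z a τ ∈ univ ×ˢ I)
  rwa [lineThrough_self] at this

theorem partialX_eq_fderivWithin (hf : DifferentiableWithinAt ℝ f (univ ×ˢ I) z)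
    (hz : z ∈ univ ×ˢ I) : partialX f z = fderivWithin ℝ f (univ ×ˢ I) z (1, 0) :=
  (hasDerivAt_horizontal hf hz).deriv

theorem hasDerivAt_partialX (hf : DifferentiableWithinAt ℝ f (univ ×ˢ I) z)
    (hz : z ∈ univ ×ˢ I) : HasDerivAt (fun y => f (y, z.2)) (partialX f z) z.1 :=
  (hasDerivAt_horizontal hf hz).differentiableAt.hasDerivAt

theorem partialT_eq_fderivWithin (hI : UniqueDiffOn ℝ I)
    (hf : DifferentiableWithinAt ℝ f (univ ×ˢ I) z) (hz : z ∈ univ ×ˢ I) :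
    partialT I f z = fderivWithin ℝ f (univ ×ˢ I) z (0, 1) := by
  have hvert : f ∘ lineThrough z 0 = fun τ => f (z.1, τ) := by
    funext τ
    simp [lineThrough]
  have := hasDerivWithinAt_lineThrough hf 0
  rw [hvert] at this
  exact this.derivWithin (hI _ hz.2)

theorem hasDerivWithinAt_comp_lineThrough (hI : UniqueDiffOn ℝ I)
    (hf : DifferentiableWithinAt ℝ f (univ ×ˢ I) z) (hz : z ∈ univ ×ˢ I) (a : ℝ) :
    HasDerivWithinAt (f ∘ lineThrough z a) (a * partialX f z + partialT I f z) I z.2 := by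
  have hdir : ((a, 1) : ℝ × ℝ) = a • ((1 : ℝ), (0 : ℝ)) + ((0 : ℝ), (1 : ℝ)) := by simp
  rw [partialX_eq_fderivWithin hf hz, partialT_eq_fderivWithin hI hf hz, ← smul_eq_mul,
    ← map_smul, ← map_add, ← hdir]
  exact hasDerivWithinAt_lineThrough hf a

theorem partialX_congr (hfg : EqOn f g (univ ×ˢ I)) (hz : z ∈ univ ×ˢ I) :
    partialX f z = partialX g z := by
  unfold partialX
  congr 1
  funext y
  exact hfg ⟨mem_univ y, hz.2⟩

theorem contDiffOn_fderivWithin_apply (hI : UniqueDiffOn ℝ I)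
    (hf : ContDiffOn ℝ ∞ f (univ ×ˢ I)) (v : ℝ × ℝ) :
    ContDiffOn ℝ ∞ (fun w => fderivWithin ℝ f (univ ×ˢ I) w v) (univ ×ˢ I) :=
  (ContinuousLinearMap.apply ℝ ℝ v).contDiff.comp_contDiffOn
    (hf.fderivWithin (uniqueDiffOn_univ.prod hI) le_rfl)

theorem contDiffOn_partialX (hI : UniqueDiffOn ℝ I) (hf : ContDiffOn ℝ ∞ f (univ ×ˢ I)) :
    ContDiffOn ℝ ∞ (partialX f) (univ ×ˢ I) :=
  (contDiffOn_fderivWithin_apply hI hf (1, 0)).congr fun z hz =>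
    partialX_eq_fderivWithin (hf.differentiableOn (by simp) z hz) hz

theorem hasDerivWithinAt_partialX_of_eqOn (hI : UniqueDiffOn ℝ I)
    (hI' : I ⊆ closure (interior I)) (hf : ContDiffOn ℝ ∞ f (univ ×ˢ I))
    (hfg : EqOn (partialT I f) g (univ ×ˢ I)) (hz : z ∈ univ ×ˢ I) :
    HasDerivWithinAt (fun τ => partialX f (z.1, τ)) (partialX g z) I z.2 := by
  have hdf : DifferentiableOn ℝ f (univ ×ˢ I) := hf.differentiableOn (by simp)
  have hF : ∀ v, DifferentiableOn ℝ (fun w => fderivWithin ℝ f (univ ×ˢ I) w v) (univ ×ˢ I) :=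
    fun v => (contDiffOn_fderivWithin_apply hI hf v).differentiableOn (by simp)
  have hclosure : z ∈ closure (interior (univ ×ˢ I)) := by
    rw [interior_prod_eq, closure_prod_eq, interior_univ, closure_univ]
    exact ⟨mem_univ _, hI' hz.2⟩
  have hvert := hasDerivWithinAt_lineThrough (hF (1, 0) z hz) 0
  have hswap : fderivWithin ℝ (fun w => fderivWithin ℝ f (univ ×ˢ I) w (1, 0)) (univ ×ˢ I) z
      (0, 1) = partialX g z := by
    rw [ContDiffOn.fderivWithin_fderivWithin_comm (hf.of_le ENat.LEInfty.out)
      (uniqueDiffOn_univ.prod hI) hclosure hz, ← partialX_eq_fderivWithin (hF (0, 1) z hz) hz]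
    exact (partialX_congr (fun w hw => (partialT_eq_fderivWithin hI (hdf w hw) hw).symm) hz).trans
      (partialX_congr hfg hz)
  have hline : ∀ τ ∈ I, partialX f (z.1, τ)
      = ((fun w => fderivWithin ℝ f (univ ×ˢ I) w (1, 0)) ∘ lineThrough z 0) τ := by
    intro τ hτ
    simp only [Function.comp, lineThrough, zero_mul, add_zero]
    exact partialX_eq_fderivWithin (hdf _ ⟨mem_univ _, hτ⟩) ⟨mem_univ _, hτ⟩
  exact (hswap ▸ hvert).congr hline (hline z.2 hz.2)

end Strip

def correctionProfile (h c : ℝ → ℝ) (t u p q : ℝ) : ℝ :=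
  (deriv (fun w => c w * iteratedDeriv 3 h w) u * p ^ 2
      + 2 * c u * iteratedDeriv 3 h u * q
      + t * c u * iteratedDeriv 3 h u ^ 2 * p * q
      + t * deriv c u * iteratedDeriv 3 h u ^ 2 * p ^ 3)
    / (1 + t * iteratedDeriv 3 h u * p) ^ 2

theorem hasDerivWithinAt_correctionProfile_of_characteristic {h c : ℝ → ℝ} (hh : ContDiff ℝ ∞ h)
    (hc : ContDiff ℝ ∞ c) {U P Q : ℝ → ℝ} {s : Set ℝ} {σ : ℝ}
    (hU : HasDerivWithinAt U 0 s σ)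
    (hP : HasDerivWithinAt P (iteratedDeriv 3 h (U σ) * P σ ^ 2) s σ)
    (hQ : HasDerivWithinAt Q
      (iteratedDeriv 4 h (U σ) * P σ ^ 3 + 3 * iteratedDeriv 3 h (U σ) * P σ * Q σ) s σ)
    (hD : 1 + σ * iteratedDeriv 3 h (U σ) * P σ ≠ 0) :
    HasDerivWithinAt (fun τ => τ / 2 * correctionProfile h c τ (U τ) (P τ) (Q τ))
      (c (U σ) * iteratedDeriv 3 h (U σ) * Q σ
        + 1 / 2 * deriv (fun w => c w * iteratedDeriv 3 h w) (U σ) * P σ ^ 2) s σ := by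
  have hcoeff : ∀ φ : ℝ → ℝ, ContDiff ℝ ∞ φ → HasDerivWithinAt (fun τ => φ (U τ)) 0 s σ :=
    fun φ hφ => (((hφ.differentiable (by simp)) (U σ)).hasDerivAt.comp_hasDerivWithinAt σ
      hU).congr_deriv (mul_zero _)
  have hb := hh.contDiff_iteratedDeriv 3
  have hg : ContDiff ℝ ∞ (fun w => c w * iteratedDeriv 3 h w) := hc.mul hb
  have hC := hcoeff c hc
  have hC' := hcoeff _ (contDiff_infty_iff_deriv.mp hc).2
  have hB := hcoeff _ hb
  have hG := hcoeff _ (contDiff_infty_iff_deriv.mp hg).2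
  have hτ : HasDerivWithinAt (fun τ : ℝ => τ) 1 s σ := hasDerivWithinAt_id σ s
  have hN := (((hG.mul (hP.pow 2)).add (((hC.const_mul 2).mul hB).mul hQ)).add
      ((((hτ.mul hC).mul (hB.pow 2)).mul hP).mul hQ)).add
    (((hτ.mul hC').mul (hB.pow 2)).mul (hP.pow 3))
  have hDen := ((hτ.mul hB).mul hP).const_add 1
  have hW := (hτ.div_const 2).mul (hN.div (hDen.pow 2) (pow_ne_zero 2 hD))
  have hderiv : deriv (fun w => c w * iteratedDeriv 3 h w) (U σ)
      = deriv c (U σ) * iteratedDeriv 3 h (U σ) + c (U σ) * iteratedDeriv 4 h (U σ) := by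
    rw [deriv_fun_mul (hc.differentiable (by simp) _) (hb.differentiable (by simp) _),
      ← iteratedDeriv_succ]
  refine hW.congr_deriv ?_
  simp only [Pi.mul_apply, Pi.add_apply, Pi.pow_apply, Pi.div_apply, hderiv]
  have hD' : 1 + iteratedDeriv 3 h (U σ) * P σ * σ ≠ 0 := by
    convert hD using 1; ring
  field_simp
  ring

def correctionPotential (h c : ℝ → ℝ) (u : ℝ × ℝ → ℝ) (z : ℝ × ℝ) : ℝ :=
  z.2 / 2 * correctionProfile h c z.2 (u z) (partialX u z) (partialX (partialX u) z)

section HopfSolution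

variable {I : Set ℝ} {h c : ℝ → ℝ} {u : ℝ × ℝ → ℝ}

theorem partialT_partialX_of_hopf (hI : UniqueDiffOn ℝ I) (hI' : I ⊆ closure (interior I))
    (hh : ContDiff ℝ ∞ h) (hu : ContDiffOn ℝ ∞ u (univ ×ˢ I))
    (hpde : EqOn (partialT I u) (fun z => iteratedDeriv 2 h (u z) * partialX u z) (univ ×ˢ I)) :
    EqOn (partialT I (partialX u))
      (fun z => iteratedDeriv 3 h (u z) * partialX u z ^ 2
        + iteratedDeriv 2 h (u z) * partialX (partialX u) z) (univ ×ˢ I) := by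
  intro z hz
  have hp := contDiffOn_partialX hI hu
  have hux := hasDerivAt_partialX (hu.differentiableOn (by simp) z hz) hz
  have hpx := hasDerivAt_partialX (hp.differentiableOn (by simp) z hz) hz
  have hflux := ((hh.hasDerivAt_iteratedDeriv 2 (u z)).comp z.1 hux).mul hpx
  rw [partialT, (hasDerivWithinAt_partialX_of_eqOn hI hI' hu hpde hz).derivWithin (hI _ hz.2)]
  refine hflux.deriv.trans ?_
  simp only [Function.comp_apply, Prod.mk.eta]
  ring

theorem partialT_partialX_partialX_of_hopf (hI : UniqueDiffOn ℝ I)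
    (hI' : I ⊆ closure (interior I)) (hh : ContDiff ℝ ∞ h) (hu : ContDiffOn ℝ ∞ u (univ ×ˢ I))
    (hpde : EqOn (partialT I u) (fun z => iteratedDeriv 2 h (u z) * partialX u z) (univ ×ˢ I)) :
    EqOn (partialT I (partialX (partialX u)))
      (fun z => iteratedDeriv 4 h (u z) * partialX u z ^ 3
        + 3 * iteratedDeriv 3 h (u z) * partialX u z * partialX (partialX u) z
        + iteratedDeriv 2 h (u z) * partialX (partialX (partialX u)) z) (univ ×ˢ I) := by
  intro z hz
  have hp := contDiffOn_partialX hI hu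
  have hq := contDiffOn_partialX hI hp
  have hux := hasDerivAt_partialX (hu.differentiableOn (by simp) z hz) hz
  have hpx := hasDerivAt_partialX (hp.differentiableOn (by simp) z hz) hz
  have hqx := hasDerivAt_partialX (hq.differentiableOn (by simp) z hz) hz
  have hflux := (((hh.hasDerivAt_iteratedDeriv 3 (u z)).comp z.1 hux).mul (hpx.pow 2)).add
    (((hh.hasDerivAt_iteratedDeriv 2 (u z)).comp z.1 hux).mul hqx)
  rw [partialT, (hasDerivWithinAt_partialX_of_eqOn hI hI' hp
    (partialT_partialX_of_hopf hI hI' hh hu hpde) hz).derivWithin (hI _ hz.2)]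
  refine hflux.deriv.trans ?_
  simp only [Function.comp_apply, Prod.mk.eta, Pi.pow_apply]
  ring

theorem contDiffOn_correctionPotential (hI : UniqueDiffOn ℝ I) (hh : ContDiff ℝ ∞ h)
    (hc : ContDiff ℝ ∞ c) (hu : ContDiffOn ℝ ∞ u (univ ×ˢ I))
    (hD : ∀ z ∈ univ ×ˢ I, 1 + z.2 * iteratedDeriv 3 h (u z) * partialX u z ≠ 0) :
    ContDiffOn ℝ ∞ (correctionPotential h c u) (univ ×ˢ I) := by
  have hp := contDiffOn_partialX hI hu
  have hq := contDiffOn_partialX hI hp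
  have hb := hh.contDiff_iteratedDeriv 3
  have hc' := (contDiff_infty_iff_deriv.mp hc).2
  have hG := (contDiff_infty_iff_deriv.mp (hc.mul (hh.contDiff_iteratedDeriv 3))).2
  unfold correctionPotential correctionProfile
  fun_prop (disch := exact fun z hz => pow_ne_zero 2 (hD z hz))

theorem partialT_correctionPotential (hI : UniqueDiffOn ℝ I) (hI' : I ⊆ closure (interior I))
    (hh : ContDiff ℝ ∞ h) (hc : ContDiff ℝ ∞ c) (hu : ContDiffOn ℝ ∞ u (univ ×ˢ I))
    (hpde : EqOn (partialT I u) (fun z => iteratedDeriv 2 h (u z) * partialX u z) (univ ×ˢ I))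
    (hD : ∀ z ∈ univ ×ˢ I, 1 + z.2 * iteratedDeriv 3 h (u z) * partialX u z ≠ 0) :
    EqOn (partialT I (correctionPotential h c u))
      (fun z => iteratedDeriv 2 h (u z) * partialX (correctionPotential h c u) z
        + c (u z) * iteratedDeriv 3 h (u z) * partialX (partialX u) z
        + 1 / 2 * deriv (fun w => c w * iteratedDeriv 3 h w) (u z) * partialX u z ^ 2)
      (univ ×ˢ I) := by
  intro z hz
  have hp := contDiffOn_partialX hI hu
  have hq := contDiffOn_partialX hI hp
  have hW := contDiffOn_correctionPotential hI hh hc hu hD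
  set a := iteratedDeriv 2 h (u z)
  have hchar : ∀ {f : ℝ × ℝ → ℝ} {f' : ℝ}, ContDiffOn ℝ ∞ f (univ ×ˢ I) →
      partialT I f z = a * partialX f z + f' →
      HasDerivWithinAt (f ∘ lineThrough z (-a)) f' I z.2 := fun hf hf' =>
    (hasDerivWithinAt_comp_lineThrough hI (hf.differentiableOn (by simp) z hz) hz (-a)).congr_deriv
      (by rw [hf']; ring)
  have hU : HasDerivWithinAt (u ∘ lineThrough z (-a)) 0 I z.2 :=
    hchar hu (by rw [hpde hz]; ring)
  have hγ : ∀ f : ℝ × ℝ → ℝ, (f ∘ lineThrough z (-a)) z.2 = f z :=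
    fun f => congrArg f (lineThrough_self z (-a))
  have hP : HasDerivWithinAt (partialX u ∘ lineThrough z (-a))
      (iteratedDeriv 3 h ((u ∘ lineThrough z (-a)) z.2)
        * (partialX u ∘ lineThrough z (-a)) z.2 ^ 2) I z.2 := by
    rw [hγ, hγ]
    exact hchar hp (by rw [partialT_partialX_of_hopf hI hI' hh hu hpde hz]; ring)
  have hQ : HasDerivWithinAt (partialX (partialX u) ∘ lineThrough z (-a))
      (iteratedDeriv 4 h ((u ∘ lineThrough z (-a)) z.2)
          * (partialX u ∘ lineThrough z (-a)) z.2 ^ 3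
        + 3 * iteratedDeriv 3 h ((u ∘ lineThrough z (-a)) z.2)
          * (partialX u ∘ lineThrough z (-a)) z.2
          * (partialX (partialX u) ∘ lineThrough z (-a)) z.2) I z.2 := by
    rw [hγ, hγ, hγ]
    exact hchar hq (by rw [partialT_partialX_partialX_of_hopf hI hI' hh hu hpde hz]; ring)
  have hD' : 1 + z.2 * iteratedDeriv 3 h ((u ∘ lineThrough z (-a)) z.2)
      * (partialX u ∘ lineThrough z (-a)) z.2 ≠ 0 := by
    rw [hγ, hγ]
    exact hD z hz
  have hchain := hasDerivWithinAt_correctionProfile_of_characteristic hh hc hU hP hQ hD'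
  simp only [hγ] at hchain
  have hline := hasDerivWithinAt_comp_lineThrough hI (hW.differentiableOn (by simp) z hz) hz (-a)
  linear_combination (hI _ hz.2).eq_deriv _ hline hchain

end HopfSolution

end Semiclassical

open Semiclassical in
theorem first_correction_satisfies_transport_equation_general
    (h c : ℝ → ℝ) (T : ℝ)
    (hh : ContDiff ℝ (⊤ : ℕ∞) h) (hc : ContDiff ℝ (⊤ : ℕ∞) c)
    (v0 : ℝ → ℝ → ℝ)
    (hv0smooth : ContDiffOn ℝ (⊤ : ℕ∞) (fun z : ℝ × ℝ => v0 z.1 z.2)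
      (Set.univ ×ˢ Set.Ico 0 T))
    (hv0pde : ∀ x : ℝ, ∀ t ∈ Set.Ico (0:ℝ) T, HasDerivWithinAt (fun τ => v0 x τ)
      (iteratedDeriv 2 h (v0 x t) * deriv (fun y => v0 y t) x) (Set.Ico 0 T) t)
    (hpos : ∀ x : ℝ, ∀ t ∈ Set.Ico (0:ℝ) T,
      0 < 1 + t * iteratedDeriv 3 h (v0 x t) * deriv (fun y => v0 y t) x)
    (v1 : ℝ → ℝ → ℝ)
    (hv1 : ∀ x t, v1 x t = t / 2 * deriv (fun y =>
      (deriv (fun w => c w * iteratedDeriv 3 h w) (v0 y t) * (deriv (fun z => v0 z t) y)^2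
        + 2 * c (v0 y t) * iteratedDeriv 3 h (v0 y t) * iteratedDeriv 2 (fun z => v0 z t) y
        + t * c (v0 y t) * (iteratedDeriv 3 h (v0 y t))^2
            * deriv (fun z => v0 z t) y * iteratedDeriv 2 (fun z => v0 z t) y
        + t * deriv c (v0 y t) * (iteratedDeriv 3 h (v0 y t))^2
            * (deriv (fun z => v0 z t) y)^3)
      / (1 + t * iteratedDeriv 3 h (v0 y t) * deriv (fun z => v0 z t) y)^2) x) :
    (∀ x : ℝ, ∀ t ∈ Set.Ico (0:ℝ) T,
      HasDerivWithinAt (fun τ => v1 x τ)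
        (deriv (fun y =>
            iteratedDeriv 2 h (v0 y t) * v1 y t
            + c (v0 y t) * iteratedDeriv 3 h (v0 y t) * iteratedDeriv 2 (fun z => v0 z t) y
            + (1/2) * deriv (fun w => c w * iteratedDeriv 3 h w) (v0 y t)
                * (deriv (fun z => v0 z t) y)^2) x)
        (Set.Ico 0 T) t)
    ∧ (∀ x : ℝ, v1 x 0 = 0) := by
  have hI : UniqueDiffOn ℝ (Ico (0 : ℝ) T) := uniqueDiffOn_Ico 0 T
  have hI' : Ico (0 : ℝ) T ⊆ closure (interior (Ico 0 T)) := fun t ht => by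
    rw [interior_Ico, closure_Ioo (ht.1.trans_lt ht.2).ne]
    exact Ico_subset_Icc_self ht
  have hpde : EqOn (partialT (Ico 0 T) fun z => v0 z.1 z.2)
      (fun z => iteratedDeriv 2 h (v0 z.1 z.2) * partialX (fun z => v0 z.1 z.2) z)
      (univ ×ˢ Ico 0 T) := fun z hz => (hv0pde z.1 z.2 hz.2).derivWithin (hI _ hz.2)
  have hD : ∀ z ∈ univ ×ˢ Ico (0 : ℝ) T,
      1 + z.2 * iteratedDeriv 3 h (v0 z.1 z.2) * partialX (fun z => v0 z.1 z.2) z ≠ 0 :=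
    fun z hz => (hpos z.1 z.2 hz.2).ne'
  have hv1W : ∀ y τ, v1 y τ = partialX (correctionPotential h c fun z => v0 z.1 z.2) (y, τ) := by
    intro y τ
    rw [hv1]
    simp only [iteratedDeriv_two_eq_partialX_partialX (fun z => v0 z.1 z.2)]
    exact (congrFun (deriv_const_mul_field' _) y).symm
  refine ⟨fun x t ht => ?_, fun x => by simp [hv1]⟩
  have hz : ((x, t) : ℝ × ℝ) ∈ univ ×ˢ Ico 0 T := ⟨mem_univ x, ht⟩
  refine ((hasDerivWithinAt_partialX_of_eqOn hI hI'
    (contDiffOn_correctionPotential hI hh hc hv0smooth hD)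
    (partialT_correctionPotential hI hI' hh hc hv0smooth hpde hD) hz).congr
    (fun τ _ => hv1W x τ) (hv1W x t)).congr_deriv ?_
  simp only [hv1W, iteratedDeriv_two_eq_partialX_partialX (fun z => v0 z.1 z.2)]
  rfl

/-- the explicit universal formula for the first semiclassical
correction `v¹` satisfies the first transport equation with zero initial data. -/
theorem first_correction_satisfies_transport_equation
    (h c : ℝ → ℝ) (T : ℝ) (hT : 0 < T)
    (hh : ContDiff ℝ (⊤ : ℕ∞) h) (hc : ContDiff ℝ (⊤ : ℕ∞) c)
    (v0 : ℝ → ℝ → ℝ)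
    (hv0smooth : ContDiffOn ℝ (⊤ : ℕ∞) (fun z : ℝ × ℝ => v0 z.1 z.2)
      (Set.univ ×ˢ Set.Ico 0 T))
    (hv0pde : ∀ x : ℝ, ∀ t ∈ Set.Ico (0:ℝ) T, HasDerivWithinAt (fun τ => v0 x τ)
      (iteratedDeriv 2 h (v0 x t) * deriv (fun y => v0 y t) x) (Set.Ico 0 T) t)
    (hpos : ∀ x : ℝ, ∀ t ∈ Set.Ico (0:ℝ) T,
      0 < 1 + t * iteratedDeriv 3 h (v0 x t) * deriv (fun y => v0 y t) x)
    (v1 : ℝ → ℝ → ℝ)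
    (hv1 : ∀ x t, v1 x t = t / 2 * deriv (fun y =>
      (deriv (fun w => c w * iteratedDeriv 3 h w) (v0 y t) * (deriv (fun z => v0 z t) y)^2
        + 2 * c (v0 y t) * iteratedDeriv 3 h (v0 y t) * iteratedDeriv 2 (fun z => v0 z t) y
        + t * c (v0 y t) * (iteratedDeriv 3 h (v0 y t))^2
            * deriv (fun z => v0 z t) y * iteratedDeriv 2 (fun z => v0 z t) y
        + t * deriv c (v0 y t) * (iteratedDeriv 3 h (v0 y t))^2
            * (deriv (fun z => v0 z t) y)^3)
      / (1 + t * iteratedDeriv 3 h (v0 y t) * deriv (fun z => v0 z t) y)^2) x) :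
    (∀ x : ℝ, ∀ t ∈ Set.Ico (0:ℝ) T,
      HasDerivWithinAt (fun τ => v1 x τ)
        (deriv (fun y =>
            iteratedDeriv 2 h (v0 y t) * v1 y t
            + c (v0 y t) * iteratedDeriv 3 h (v0 y t) * iteratedDeriv 2 (fun z => v0 z t) y
            + (1/2) * deriv (fun w => c w * iteratedDeriv 3 h w) (v0 y t)
                * (deriv (fun z => v0 z t) y)^2) x)
        (Set.Ico 0 T) t)
    ∧ (∀ x : ℝ, v1 x 0 = 0) :=
  first_correction_satisfies_transport_equation_general h c T hh hc v0 hv0smooth hv0pde hpos v1 hv1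
end
end

section
/- Let h, c be smooth functions of one variable and let t ≥ 0 be a parameter. Consider the density k₁ = −(1/2)·c(u)·u_x·log(1 + t·h'''(u)·u_x), so that K₁ = ∫k₁ dx and δK₁/δu = E(k₁) = ∂k₁/∂u − (d/dx)(∂k₁/∂u_x). Then, identically in the jet variables u, u_x, u_xx, u_xxx (wherever 1 + t·h'''(u)·u_x > 0), one has (d/dx)E(k₁) = (t/2)·(d/dx)[ ((c·h''')'·u_x² + 2·c·h'''·u_xx + t·c·(h''')²·u_x·u_xx + t·c'·(h''')²·u_x³) / (1 + t·h'''·u_x)² ]. Consequently, if v⁰ solves v⁰_t = h''(v⁰)v⁰_x, the first semiclassical correction v¹ admits the Hamiltonian representation v¹(x,t) = ∂_x( (δK₁/δu)|_{u=v⁰(x,t)} ). -/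
open Set

noncomputable section

/-- The density `k₁ = -(1/2)·c(u)·u_x·log(1 + t·h'''(u)·u_x)` of the generating
functional `K₁`. -/
def K1den (h c : ℝ → ℝ) (t : ℝ) (v : ℕ → ℝ) : ℝ :=
  -(1/2) * c (v 0) * v 1 * Real.log (1 + t * iteratedDeriv 3 h (v 0) * v 1)

/-- The right-hand side of the universal formula for `v¹`, as a jet density. -/
def v1den (h c : ℝ → ℝ) (t : ℝ) (v : ℕ → ℝ) : ℝ :=
  (deriv (fun w => c w * iteratedDeriv 3 h w) (v 0) * (v 1)^2
    + 2 * c (v 0) * iteratedDeriv 3 h (v 0) * v 2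
    + t * c (v 0) * (iteratedDeriv 3 h (v 0))^2 * v 1 * v 2
    + t * deriv c (v 0) * (iteratedDeriv 3 h (v 0))^2 * (v 1)^3)
  / (1 + t * iteratedDeriv 3 h (v 0) * v 1)^2

/-!
The density `k₁` depends only on `u` and `u_x`, so `E(k₁) = ∂k₁/∂u - (d/dx)(∂k₁/∂u_x)` involves
only `∂_u k₁`, `∂_u ∂_{u_x} k₁` and `∂²_{u_x} k₁`, and a direct computation with
`L = 1 + t h'''(u) u_x` (using `d/dp (p log L) = log L + 1 - 1/L`) gives
`E(k₁) = (t/2)·[(c h''')' u_x² + 2 c h''' u_xx + t c h'''² u_x u_xx + t c' h'''² u_x³] / L²`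
pointwise wherever `L ≠ 0`. Since `d/dx` only sees partial derivatives, it is local, so the
identity survives `d/dx` on the open set `L > 0`. Evaluating the pointwise identity on the jet of
`v⁰` and differentiating in `x` gives `v¹ = ∂_x (δK₁/δu)|_{u = v⁰}`.
-/

open Filter Topology

section JetCalculus

lemma pderivJet_congr {P Q : (ℕ → ℝ) → ℝ} {v : ℕ → ℝ} (hPQ : P =ᶠ[𝓝 v] Q) (k : ℕ) :
    pderivJet P k v = pderivJet Q k v := by
  have hupdate : Tendsto (fun y => Function.update v k y) (𝓝 (v k)) (𝓝 v) := by
    have hcont : Continuous fun y : ℝ => Function.update v k y :=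
      continuous_const.update k continuous_id
    simpa using hcont.tendsto (v k)
  exact EventuallyEq.deriv_eq (hupdate.eventually hPQ)

lemma totalDer_congr {P Q : (ℕ → ℝ) → ℝ} {v : ℕ → ℝ} (hPQ : P =ᶠ[𝓝 v] Q) :
    totalDer P v = totalDer Q v := by
  simp only [totalDer, pderivJet_congr hPQ]

lemma totalDer_const_mul (a : ℝ) (P : (ℕ → ℝ) → ℝ) (v : ℕ → ℝ) :
    totalDer (fun w => a * P w) v = a * totalDer P v := by
  simp only [totalDer, pderivJet, deriv_const_mul_field, mul_left_comm (v _), tsum_mul_left]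

lemma totalDer_zero : totalDer (fun _ => 0) = fun _ => 0 := by
  funext v
  simp [totalDer, pderivJet]

variable (F : ℝ → ℝ → ℝ) (v : ℕ → ℝ)

lemma pderivJet_firstOrder_zero :
    pderivJet (fun w => F (w 0) (w 1)) 0 v = deriv (fun u => F u (v 1)) (v 0) := by
  simp [pderivJet]

lemma pderivJet_firstOrder_one :
    pderivJet (fun w => F (w 0) (w 1)) 1 v = deriv (F (v 0)) (v 1) := by
  simp [pderivJet]

lemma pderivJet_firstOrder_of_two_le {k : ℕ} (hk : 2 ≤ k) :
    pderivJet (fun w => F (w 0) (w 1)) k v = 0 := by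
  simp [pderivJet, Function.update_of_ne (by omega : 0 ≠ k),
    Function.update_of_ne (by omega : 1 ≠ k)]

lemma totalDer_firstOrder :
    totalDer (fun w => F (w 0) (w 1)) v
      = v 1 * deriv (fun u => F u (v 1)) (v 0) + v 2 * deriv (F (v 0)) (v 1) := by
  rw [totalDer, tsum_eq_sum (s := {0, 1}), Finset.sum_pair zero_ne_one,
    pderivJet_firstOrder_zero, pderivJet_firstOrder_one]
  intro k hk
  rw [pderivJet_firstOrder_of_two_le F v (by simp at hk; omega), mul_zero]

lemma EulerOp_firstOrder :
    EulerOp (fun w => F (w 0) (w 1)) v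
      = deriv (fun u => F u (v 1)) (v 0)
        - (v 1 * deriv (fun u => deriv (F u) (v 1)) (v 0)
          + v 2 * deriv (deriv (F (v 0))) (v 1)) := by
  have hmomentum : pderivJet (fun w => F (w 0) (w 1)) 1 = fun w => deriv (F (w 0)) (w 1) :=
    funext (pderivJet_firstOrder_one F)
  rw [EulerOp, tsum_eq_sum (s := {0, 1}), Finset.sum_pair zero_ne_one]
  · simp only [Function.iterate_zero, Function.iterate_one, id, hmomentum,
      totalDer_firstOrder (fun u p => deriv (F u) p), pderivJet_firstOrder_zero]
    ring
  · intro k hk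
    have hzero : pderivJet (fun w => F (w 0) (w 1)) k = fun _ => 0 :=
      funext fun w => pderivJet_firstOrder_of_two_le F w (by simp at hk; omega)
    rw [hzero, Function.iterate_fixed totalDer_zero, mul_zero]

end JetCalculus

lemma HasDerivAt.log_add_one_sub_inv {f : ℝ → ℝ} {f' x : ℝ} (hf : HasDerivAt f f' x)
    (hx : f x ≠ 0) :
    HasDerivAt (fun y => Real.log (f y) + 1 - (f y)⁻¹) (f' / f x + f' / f x ^ 2) x := by
  refine (((hf.log hx).add_const 1).sub (hf.inv hx)).congr_deriv ?_
  ring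

section FirstCorrection

def k1Density (c H : ℝ → ℝ) (t u p : ℝ) : ℝ :=
  -(1/2) * c u * p * Real.log (1 + t * H u * p)

def k1DensityDerivUx (c H : ℝ → ℝ) (t u p : ℝ) : ℝ :=
  -(1/2) * c u * (Real.log (1 + t * H u * p) + 1 - (1 + t * H u * p)⁻¹)

variable {c H : ℝ → ℝ} {t u p : ℝ}

lemma hasDerivAt_logArg_ux :
    HasDerivAt (fun q => 1 + t * H u * q) (t * H u) p := by
  simpa using ((hasDerivAt_id' p).const_mul (t * H u)).const_add 1

lemma hasDerivAt_logArg_u (hH : DifferentiableAt ℝ H u) :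
    HasDerivAt (fun u' => 1 + t * H u' * p) (t * deriv H u * p) u := by
  simpa [mul_assoc] using ((hH.hasDerivAt.const_mul t).mul_const p).const_add 1

lemma hasDerivAt_k1Density_ux (hL : 1 + t * H u * p ≠ 0) :
    HasDerivAt (k1Density c H t u) (k1DensityDerivUx c H t u p) p := by
  refine (((hasDerivAt_id' p).const_mul (-(1/2) * c u)).mul
    (hasDerivAt_logArg_ux.log hL)).congr_deriv ?_
  rw [k1DensityDerivUx]
  field_simp
  ring

lemma hasDerivAt_k1Density_u (hc : DifferentiableAt ℝ c u) (hH : DifferentiableAt ℝ H u)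
    (hL : 1 + t * H u * p ≠ 0) :
    HasDerivAt (fun u' => k1Density c H t u' p)
      (-(1/2) * (deriv c u * p * Real.log (1 + t * H u * p)
        + c u * p * (t * deriv H u * p / (1 + t * H u * p)))) u := by
  refine (((hc.hasDerivAt.const_mul (-(1/2))).mul_const p).mul
    ((hasDerivAt_logArg_u hH).log hL)).congr_deriv ?_
  ring

lemma hasDerivAt_k1DensityDerivUx_ux (hL : 1 + t * H u * p ≠ 0) :
    HasDerivAt (k1DensityDerivUx c H t u)
      (-(1/2) * c u * (t * H u / (1 + t * H u * p) + t * H u / (1 + t * H u * p) ^ 2)) p :=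
  (hasDerivAt_logArg_ux.log_add_one_sub_inv hL).const_mul _

lemma hasDerivAt_k1DensityDerivUx_u (hc : DifferentiableAt ℝ c u)
    (hH : DifferentiableAt ℝ H u) (hL : 1 + t * H u * p ≠ 0) :
    HasDerivAt (fun u' => k1DensityDerivUx c H t u' p)
      (-(1/2) * (deriv c u * (Real.log (1 + t * H u * p) + 1 - (1 + t * H u * p)⁻¹)
        + c u * (t * deriv H u * p / (1 + t * H u * p)
          + t * deriv H u * p / (1 + t * H u * p) ^ 2))) u := by
  refine ((hc.hasDerivAt.const_mul (-(1/2))).mul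
    ((hasDerivAt_logArg_u hH).log_add_one_sub_inv hL)).congr_deriv ?_
  ring

lemma deriv_k1Density_ux (hL : 1 + t * H u * p ≠ 0) :
    deriv (k1Density c H t u) p = k1DensityDerivUx c H t u p :=
  (hasDerivAt_k1Density_ux hL).deriv

lemma EulerOp_k1Density (v : ℕ → ℝ) (hc : DifferentiableAt ℝ c (v 0))
    (hH : DifferentiableAt ℝ H (v 0)) (hL : 1 + t * H (v 0) * v 1 ≠ 0) :
    EulerOp (fun w => k1Density c H t (w 0) (w 1)) v
      = t / 2 * ((deriv (fun w => c w * H w) (v 0) * (v 1) ^ 2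
          + 2 * c (v 0) * H (v 0) * v 2
          + t * c (v 0) * H (v 0) ^ 2 * v 1 * v 2
          + t * deriv c (v 0) * H (v 0) ^ 2 * (v 1) ^ 3)
        / (1 + t * H (v 0) * v 1) ^ 2) := by
  have hmixed : (fun u' => deriv (k1Density c H t u') (v 1))
      =ᶠ[𝓝 (v 0)] fun u' => k1DensityDerivUx c H t u' (v 1) := by
    have hLcont : ContinuousAt (fun u' => 1 + t * H u' * v 1) (v 0) :=
      (hasDerivAt_logArg_u hH).continuousAt
    filter_upwards [hLcont.eventually_ne hL] with u' hu' using deriv_k1Density_ux hu'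
  have hpure : deriv (k1Density c H t (v 0)) =ᶠ[𝓝 (v 1)] k1DensityDerivUx c H t (v 0) := by
    filter_upwards [hasDerivAt_logArg_ux.continuousAt.eventually_ne hL] with p' hp'
      using deriv_k1Density_ux hp'
  rw [EulerOp_firstOrder, hmixed.deriv_eq, hpure.deriv_eq,
    (hasDerivAt_k1Density_u hc hH hL).deriv, (hasDerivAt_k1DensityDerivUx_u hc hH hL).deriv,
    (hasDerivAt_k1DensityDerivUx_ux hL).deriv, (hc.hasDerivAt.fun_mul hH.hasDerivAt).deriv]
  have hL' : 1 + v 1 * t * H (v 0) ≠ 0 := by convert hL using 2; ring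
  field_simp
  ring

end FirstCorrection

lemma EulerOp_K1den {h c : ℝ → ℝ} (hh : ContDiff ℝ (⊤ : ℕ∞) h) (hc : ContDiff ℝ (⊤ : ℕ∞) c)
    {t : ℝ} {v : ℕ → ℝ} (hL : 1 + t * iteratedDeriv 3 h (v 0) * v 1 ≠ 0) :
    EulerOp (K1den h c t) v = t / 2 * v1den h c t v :=
  EulerOp_k1Density v (hc.differentiable (by simp) _)
    (hh.differentiable_iteratedDeriv 3 (WithTop.coe_lt_coe.2 (ENat.natCast_lt_top 3)) _) hL

/-- the identity `(d/dx)E(k₁) = (t/2)(d/dx)[...]` in the jet variables,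
and the Hamiltonian representation `v¹ = ∂_x(δK₁/δu |_{u=v⁰})` of the first
semiclassical correction. -/
theorem hamiltonian_representation_of_first_correction
    (h c : ℝ → ℝ)
    (hh : ContDiff ℝ (⊤ : ℕ∞) h) (hc : ContDiff ℝ (⊤ : ℕ∞) c) :
    (∀ t : ℝ, 0 ≤ t → ∀ v : ℕ → ℝ,
      0 < 1 + t * iteratedDeriv 3 h (v 0) * v 1 →
      totalDer (EulerOp (K1den h c t)) v = t / 2 * totalDer (v1den h c t) v)
    ∧ (∀ v0 : ℝ → ℝ → ℝ,
        ContDiff ℝ (⊤ : ℕ∞) (fun z : ℝ × ℝ => v0 z.1 z.2) →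
        (∀ x t, HasDerivAt (fun τ => v0 x τ)
          (iteratedDeriv 2 h (v0 x t) * deriv (fun y => v0 y t) x) t) →
        ∀ x t : ℝ, 0 ≤ t →
        (∀ y : ℝ, 0 < 1 + t * iteratedDeriv 3 h (v0 y t) * deriv (fun z => v0 z t) y) →
        t / 2 * deriv (fun y => v1den h c t (jetsAt (fun z => v0 z t) y)) x
          = deriv (fun y => EulerOp (K1den h c t) (jetsAt (fun z => v0 z t) y)) x) := by
  constructor
  · intro t _ v hpos
    have hLcont : Continuous fun w : ℕ → ℝ => 1 + t * iteratedDeriv 3 h (w 0) * w 1 := by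
      have := hh.continuous_iteratedDeriv 3 (WithTop.coe_le_coe.2 le_top)
      fun_prop
    have hEuler : EulerOp (K1den h c t) =ᶠ[𝓝 v] fun w => t / 2 * v1den h c t w := by
      filter_upwards [hLcont.continuousAt.eventually_ne hpos.ne'] with w hw
        using EulerOp_K1den hh hc hw
    rw [totalDer_congr hEuler, totalDer_const_mul]
  · intro v0 _ _ x t _ hpos
    have hEuler : (fun y => EulerOp (K1den h c t) (jetsAt (fun z => v0 z t) y))
        = fun y => t / 2 * v1den h c t (jetsAt (fun z => v0 z t) y) :=
      funext fun y => EulerOp_K1den hh hc (by simpa [jetsAt] using (hpos y).ne')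
    rw [hEuler, deriv_const_mul_field]
end
end
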